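/- arXiv:2001.11861 — 5 statements merged into one kernel-verified Lean document; each statement's English description precedes it below -/
import Mathlib

section
/- Let μ ∈ ℝ, σ > 0, λ > 0 and k = (μ − √(μ² + 2λσ²))/σ² < 0. Then lim_{y → ∞} y^{−k} · M(k, 1 − 2μ/σ² + 2k, −2/(yσ²)) = +∞ in absolute value (the expression is unbounded as y → ∞). -/
open Filter

noncomputable def kc (a b : ℂ) (n : ℕ) : ℂ :=
  (ascPochhammer ℂ n).eval a / (ascPochhammer ℂ n).eval b / (Nat.factorial n : ℂ)

lemma poch_zero (x : ℂ) (j n : ℕ) (hx : x + j = 0) (hj : j < n) :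
    (ascPochhammer ℂ n).eval x = 0 := by
  induction n with
  | zero => omega
  | succ m ih =>
    rw [ascPochhammer_succ_eval]
    rcases Nat.lt_succ_iff_lt_or_eq.mp hj with h | h
    · rw [ih h, zero_mul]
    · subst h; rw [hx, mul_zero]

lemma summable_kc (a b : ℂ) : Summable (fun n => ‖kc a b n‖) := by
  by_cases ha : ∃ j : ℕ, a + j = 0
  · obtain ⟨j, hj⟩ := ha
    apply summable_of_ne_finset_zero (s := Finset.range (j+1))
    intro n hn
    simp only [Finset.mem_range, not_lt] at hn
    simp [kc, poch_zero a j n hj (by omega)]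
  by_cases hb : ∃ j : ℕ, b + j = 0
  · obtain ⟨j, hj⟩ := hb
    apply summable_of_ne_finset_zero (s := Finset.range (j+1))
    intro n hn
    simp only [Finset.mem_range, not_lt] at hn
    simp [kc, poch_zero b j n hj (by omega)]
  push_neg at ha hb
  have hpa : ∀ n, (ascPochhammer ℂ n).eval a ≠ 0 := by
    intro n
    induction n with
    | zero => simp
    | succ m ih => rw [ascPochhammer_succ_eval]; exact mul_ne_zero ih (ha m)
  have hpb : ∀ n, (ascPochhammer ℂ n).eval b ≠ 0 := by
    intro n
    induction n with
    | zero => simp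
    | succ m ih => rw [ascPochhammer_succ_eval]; exact mul_ne_zero ih (hb m)
  have hkc : ∀ n, kc a b n ≠ 0 := by
    intro n
    exact div_ne_zero (div_ne_zero (hpa n) (hpb n)) (Nat.cast_ne_zero.mpr (Nat.factorial_ne_zero n))
  have key : ∀ n : ℕ, ‖‖kc a b (n+1)‖‖ / ‖‖kc a b n‖‖ = ‖a + n‖ / (‖b + n‖ * (n+1)) := by
    intro n
    have h1 : kc a b (n+1) = kc a b n * ((a + n) / ((b + n) * (n+1))) := by
      simp only [kc, ascPochhammer_succ_eval, Nat.factorial_succ, Nat.cast_mul]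
      push_cast
      simp only [div_eq_mul_inv, mul_inv]
      ring
    rw [norm_norm, norm_norm, h1, norm_mul, mul_comm,
      mul_div_assoc, div_self (norm_ne_zero_iff.mpr (hkc n)), mul_one, norm_div, norm_mul]
    rw [show ((n:ℂ)+1) = ((n+1:ℕ):ℂ) by push_cast; ring, Complex.norm_natCast]
    push_cast
    ring
  apply summable_of_ratio_test_tendsto_lt_one (l := 0) one_pos
  · filter_upwards with n
    exact norm_ne_zero_iff.mpr (hkc n)
  · simp only [key]
    apply squeeze_zero' (g := fun n : ℕ => 4 / (n : ℝ))
    · filter_upwards with n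
      positivity
    · filter_upwards [eventually_ge_atTop (⌈‖a‖⌉₊ + ⌈2*‖b‖⌉₊ + 1)] with n hn
      have hn1 : (1:ℝ) ≤ n := by exact_mod_cast Nat.one_le_iff_ne_zero.mpr (by omega)
      have hna : ‖a‖ ≤ n := le_trans (Nat.le_ceil _) (by exact_mod_cast by omega)
      have hnb : 2*‖b‖ ≤ n := le_trans (Nat.le_ceil _) (by exact_mod_cast by omega)
      have h2 : ‖a + (n:ℂ)‖ ≤ 2 * n := by
        calc ‖a + (n:ℂ)‖ ≤ ‖a‖ + ‖(n:ℂ)‖ := norm_add_le _ _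
        _ ≤ n + n := by rw [Complex.norm_natCast]; linarith
        _ = 2 * n := by ring
      have h3 : (n:ℝ) - ‖b‖ ≤ ‖b + (n:ℂ)‖ := by
        have h := norm_add_le ((n:ℂ) + b) (-b)
        simp only [add_neg_cancel_right, Complex.norm_natCast, norm_neg] at h
        have h' : ‖(n:ℂ) + b‖ = ‖b + (n:ℂ)‖ := by rw [add_comm]
        linarith
      have h3' : (n:ℝ)/2 ≤ ‖b + (n:ℂ)‖ := by linarith
      rw [div_le_div_iff₀ (mul_pos (by linarith : (0:ℝ) < ‖b + (n:ℂ)‖) (by linarith : (0:ℝ) < (n:ℝ)+1)) (by linarith : (0:ℝ) < (n:ℝ))]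
      nlinarith [norm_nonneg (a + (n:ℂ)), norm_nonneg (b + (n:ℂ))]
    · exact tendsto_const_div_atTop_nhds_zero_nat 4

/-- Kummer confluent hypergeometric function of the first kind,
`M(a,b,z) = ∑ (a)_n / (b)_n · zⁿ/n!`. -/
noncomputable def kummerM (a b z : ℂ) : ℂ :=
  ∑' n : ℕ, ((ascPochhammer ℂ n).eval a / (ascPochhammer ℂ n).eval b) * z ^ n / (Nat.factorial n : ℂ)

lemma kummer_near_one (a b : ℂ) : ∃ S : ℝ, 0 ≤ S ∧ ∀ z : ℂ, ‖z‖ ≤ 1 →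
    ‖kummerM a b z - 1‖ ≤ S * ‖z‖ := by
  refine ⟨∑' n, ‖kc a b (n+1)‖, tsum_nonneg (fun n => norm_nonneg _), fun z hz => ?_⟩
  have hterm : ∀ n : ℕ, ((ascPochhammer ℂ n).eval a / (ascPochhammer ℂ n).eval b) * z ^ n
      / (Nat.factorial n : ℂ) = kc a b n * z ^ n := by
    intro n; simp only [kc]; ring
  have hnorm : ∀ n : ℕ, ‖kc a b n * z ^ n‖ ≤ ‖kc a b n‖ := by
    intro n
    rw [norm_mul, norm_pow]
    calc ‖kc a b n‖ * ‖z‖ ^ n ≤ ‖kc a b n‖ * 1 ^ n := by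
          gcongr
      _ = ‖kc a b n‖ := by simp
  have hsummable : Summable (fun n : ℕ => kc a b n * z ^ n) := by
    apply Summable.of_norm
    exact Summable.of_nonneg_of_le (fun n => norm_nonneg _) hnorm (summable_kc a b)
  have hM : kummerM a b z = 1 + ∑' n : ℕ, kc a b (n+1) * z ^ (n+1) := by
    rw [kummerM]
    simp only [hterm]
    rw [Summable.tsum_eq_zero_add hsummable]
    congr 1
    simp [kc]
  rw [hM, add_sub_cancel_left]
  calc ‖∑' n : ℕ, kc a b (n+1) * z ^ (n+1)‖
      ≤ ∑' n : ℕ, ‖kc a b (n+1) * z ^ (n+1)‖ := norm_tsum_le_tsum_norm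
        (by apply Summable.of_nonneg_of_le (fun n => norm_nonneg _) ?_
              ((summable_kc a b).comp_injective (add_left_injective 1))
            intro n
            rw [norm_mul, norm_pow]
            calc ‖kc a b (n+1)‖ * ‖z‖ ^ (n+1) ≤ ‖kc a b (n+1)‖ * 1 ^ (n+1) := by
                  gcongr
              _ = _ := by simp [Function.comp])
    _ ≤ ∑' n : ℕ, ‖kc a b (n+1)‖ * ‖z‖ := by
        apply Summable.tsum_le_tsum ?_ ?_ ?_
        · intro n
          rw [norm_mul, norm_pow]
          gcongr
          calc ‖z‖ ^ (n+1) = ‖z‖ * ‖z‖ ^ n := by ring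
            _ ≤ ‖z‖ * 1 ^ n := by gcongr
            _ = ‖z‖ := by simp
        · apply Summable.of_nonneg_of_le (fun n => norm_nonneg _) ?_
            ((summable_kc a b).comp_injective (add_left_injective 1))
          intro n
          rw [norm_mul, norm_pow]
          calc ‖kc a b (n+1)‖ * ‖z‖ ^ (n+1) ≤ ‖kc a b (n+1)‖ * 1 ^ (n+1) := by
                gcongr
            _ = _ := by simp [Function.comp]
        · exact Summable.mul_right _ ((summable_kc a b).comp_injective (add_left_injective 1))
    _ = (∑' n : ℕ, ‖kc a b (n+1)‖) * ‖z‖ := by rw [tsum_mul_right]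

theorem limit_at_infty_neg_k (μ σ lam k : ℝ) (hσ : 0 < σ) (hlam : 0 < lam)
    (hk : k = (μ - Real.sqrt (μ ^ 2 + 2 * lam * σ ^ 2)) / σ ^ 2) :
    Filter.Tendsto
      (fun y : ℝ => ‖(y : ℂ) ^ (-(k : ℂ)) *
        kummerM k (1 - 2 * μ / σ ^ 2 + 2 * k) (-2 / (y * σ ^ 2))‖)
      Filter.atTop Filter.atTop := by
  have hσ2 : (0:ℝ) < σ ^ 2 := by positivity
  have hs : μ < Real.sqrt (μ ^ 2 + 2 * lam * σ ^ 2) := by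
    nlinarith [Real.sq_sqrt (show (0:ℝ) ≤ μ^2 + 2*lam*σ^2 by positivity),
      Real.sqrt_nonneg (μ^2 + 2*lam*σ^2)]
  have hk0 : k < 0 := by
    rw [hk]; apply div_neg_of_neg_of_pos (by linarith) hσ2
  obtain ⟨S, hS0, hS⟩ := kummer_near_one (k:ℂ) (1 - 2*(μ:ℂ)/(σ:ℂ)^2 + 2*(k:ℂ))
  set Y : ℝ := max 1 (max (2/σ^2) ((4*S+4)/σ^2)) with hY
  apply tendsto_atTop_mono' atTop (f₁ := fun y : ℝ => y ^ (-k) / 2)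
  · filter_upwards [eventually_ge_atTop Y] with y hy
    have hy1 : (1:ℝ) ≤ y := le_trans (le_max_left _ _) hy
    have hy0 : (0:ℝ) < y := by linarith
    have hy2 : 2/σ^2 ≤ y := le_trans (le_trans (le_max_left _ _) (le_max_right _ _)) hy
    have hy3 : (4*S+4)/σ^2 ≤ y := le_trans (le_trans (le_max_right _ _) (le_max_right _ _)) hy
    set z : ℂ := -2 / ((y:ℂ) * (σ:ℂ) ^ 2) with hz
    have hzr : z = (((-2 / (y * σ^2) : ℝ)) : ℂ) := by push_cast [hz]; ring
    have hznorm : ‖z‖ = 2 / (y * σ^2) := by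
      rw [hzr, Complex.norm_real, Real.norm_eq_abs, abs_div, abs_neg]
      rw [abs_of_pos (by positivity : (0:ℝ) < y * σ^2)]
      norm_num
    have hz1 : ‖z‖ ≤ 1 := by
      rw [hznorm, div_le_one (by positivity)]
      rw [div_le_iff₀ hσ2] at hy2
      nlinarith
    have hSz : S * ‖z‖ ≤ 1/2 := by
      rw [hznorm]
      rw [div_le_iff₀ hσ2] at hy3
      rw [show S * (2/(y*σ^2)) = 2*S/(y*σ^2) by ring, div_le_iff₀ (by positivity : (0:ℝ) < y * σ^2)]
      nlinarith
    have hMlb : (1:ℝ)/2 ≤ ‖kummerM (k:ℂ) (1 - 2*(μ:ℂ)/(σ:ℂ)^2 + 2*(k:ℂ)) z‖ := by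
      have h1 := hS z hz1
      have h2 := norm_sub_le (kummerM (k:ℂ) (1 - 2*(μ:ℂ)/(σ:ℂ)^2 + 2*(k:ℂ)) z)
        (kummerM (k:ℂ) (1 - 2*(μ:ℂ)/(σ:ℂ)^2 + 2*(k:ℂ)) z - 1)
      simp only [sub_sub_cancel, norm_one] at h2
      linarith
    have hcpow : ‖(y:ℂ) ^ (-(k:ℂ))‖ = y ^ (-k) := by
      rw [Complex.norm_cpow_eq_rpow_re_of_pos hy0]
      norm_num
    rw [norm_mul, hcpow]
    have hyk : (0:ℝ) < y ^ (-k) := Real.rpow_pos_of_pos hy0 _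
    calc y ^ (-k) / 2 = y ^ (-k) * (1/2) := by ring
      _ ≤ y ^ (-k) * ‖kummerM (k:ℂ) (1 - 2*(μ:ℂ)/(σ:ℂ)^2 + 2*(k:ℂ)) z‖ := by
          gcongr
  · exact (tendsto_rpow_atTop (by linarith : (0:ℝ) < -k)).atTop_div_const two_pos
end

section
/- Suppose u : (0,∞) → ℝ solves the ODE (σ²/2)·ξ·u''(ξ) + (ξ + σ²/2 − μ + σ²k)·u'(ξ) + k·u(ξ) = 0, where k is a root of (σ²/2)k² − μk − λ = 0. Then P(y) := y^{−k} u(1/y) solves the ODE (σ²/2)·y²·P''(y) + (by − 1)·P'(y) − λ·P(y) = 0 on (0,∞), where b = μ + σ²/2. -/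
theorem ode_transform (μ σ lam k b : ℝ) (hσ : 0 < σ) (hlam : 0 < lam)
    (hk : σ ^ 2 / 2 * k ^ 2 - μ * k - lam = 0) (hb : b = μ + σ ^ 2 / 2)
    (u u' u'' : ℝ → ℝ)
    (hu : ∀ ξ ∈ Set.Ioi (0 : ℝ), HasDerivAt u (u' ξ) ξ)
    (hu' : ∀ ξ ∈ Set.Ioi (0 : ℝ), HasDerivAt u' (u'' ξ) ξ)
    (hode : ∀ ξ ∈ Set.Ioi (0 : ℝ),
      σ ^ 2 / 2 * ξ * u'' ξ + (ξ + σ ^ 2 / 2 - μ + σ ^ 2 * k) * u' ξ + k * u ξ = 0)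
    (P : ℝ → ℝ) (hP : ∀ y ∈ Set.Ioi (0 : ℝ), P y = y ^ (-k) * u (1 / y)) :
    ∀ y ∈ Set.Ioi (0 : ℝ),
      σ ^ 2 / 2 * y ^ 2 * deriv (deriv P) y + (b * y - 1) * deriv P y - lam * P y = 0 := by
  -- helper: HasDerivAt of the substituted function at each z > 0
  have hinv : ∀ z : ℝ, 0 < z → HasDerivAt (fun w : ℝ => 1 / w) (-(1 / z ^ 2)) z := by
    intro z hz
    simpa [one_div] using hasDerivAt_inv hz.ne'
  have hUz : ∀ z : ℝ, 0 < z →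
      HasDerivAt (fun w : ℝ => u (1 / w)) (u' (1 / z) * (-(1 / z ^ 2))) z := by
    intro z hz
    have h1 : (0 : ℝ) < 1 / z := by positivity
    simpa [Function.comp_def] using (hu (1 / z) h1).comp z (hinv z hz)
  have hU'z : ∀ z : ℝ, 0 < z →
      HasDerivAt (fun w : ℝ => u' (1 / w)) (u'' (1 / z) * (-(1 / z ^ 2))) z := by
    intro z hz
    have h1 : (0 : ℝ) < 1 / z := by positivity
    simpa [Function.comp_def] using (hu' (1 / z) h1).comp z (hinv z hz)
  have hQd : ∀ z : ℝ, 0 < z →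
      HasDerivAt (fun w : ℝ => w ^ (-k) * u (1 / w))
        (-k * z ^ (-k - 1) * u (1 / z) + z ^ (-k) * (u' (1 / z) * (-(1 / z ^ 2)))) z := by
    intro z hz
    have hA : HasDerivAt (fun w : ℝ => w ^ (-k)) (-k * z ^ (-k - 1)) z := by
      simpa using Real.hasDerivAt_rpow_const (p := -k) (Or.inl hz.ne')
    exact hA.mul (hUz z hz)
  have hPeq : ∀ z ∈ Set.Ioi (0 : ℝ), deriv P z =
      -k * z ^ (-k - 1) * u (1 / z) + z ^ (-k) * (u' (1 / z) * (-(1 / z ^ 2))) := by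
    intro z hz
    have h1 : P =ᶠ[nhds z] fun w : ℝ => w ^ (-k) * u (1 / w) :=
      Filter.eventuallyEq_of_mem (isOpen_Ioi.mem_nhds hz) hP
    rw [h1.deriv_eq, (hQd z hz).deriv]
  intro y hy
  have hy0 : (0 : ℝ) < y := hy
  have hyne : y ≠ 0 := hy0.ne'
  -- second derivative
  have hA : HasDerivAt (fun w : ℝ => w ^ (-k)) (-k * y ^ (-k - 1)) y := by
    simpa using Real.hasDerivAt_rpow_const (p := -k) (Or.inl hyne)
  have hA1 : HasDerivAt (fun w : ℝ => w ^ (-k - 1)) ((-k - 1) * y ^ (-k - 1 - 1)) y := by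
    simpa using Real.hasDerivAt_rpow_const (p := -k - 1) (Or.inl hyne)
  have hneg : HasDerivAt (fun w : ℝ => -(1 / w ^ 2)) (2 / y ^ 3) y := by
    have h := ((hasDerivAt_pow 2 y).inv (pow_ne_zero 2 hyne)).neg
    have e : (fun w : ℝ => -(1 / w ^ 2)) = -(fun x : ℝ => x ^ 2)⁻¹ := by
      funext w; simp [one_div]
    rw [e]
    refine h.congr_deriv ?_
    field_simp
    ring
  have hQ'd : HasDerivAt
      (fun z : ℝ => -k * z ^ (-k - 1) * u (1 / z) + z ^ (-k) * (u' (1 / z) * (-(1 / z ^ 2))))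
      ((-k * ((-k - 1) * y ^ (-k - 1 - 1))) * u (1 / y)
        + (-k * y ^ (-k - 1)) * (u' (1 / y) * (-(1 / y ^ 2)))
        + ((-k * y ^ (-k - 1)) * (u' (1 / y) * (-(1 / y ^ 2)))
          + y ^ (-k) * ((u'' (1 / y) * (-(1 / y ^ 2))) * (-(1 / y ^ 2))
            + u' (1 / y) * (2 / y ^ 3)))) y := by
    exact ((hA1.const_mul (-k)).mul (hUz y hy0)).add
      (hA.mul ((hU'z y hy0).mul hneg))
  have h2 : deriv P =ᶠ[nhds y]
      fun z : ℝ => -k * z ^ (-k - 1) * u (1 / z) + z ^ (-k) * (u' (1 / z) * (-(1 / z ^ 2))) :=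
    Filter.eventuallyEq_of_mem (isOpen_Ioi.mem_nhds hy) hPeq
  rw [h2.deriv_eq, hQ'd.deriv, hPeq y hy, hP y hy]
  -- rewrite rpow exponents
  have e1 : y ^ (-k - 1) = y ^ (-k) * y⁻¹ := by
    rw [show -k - 1 = -k + (-1) by ring, Real.rpow_add hy0, Real.rpow_neg_one]
  have e2 : y ^ (-k - 1 - 1) = y ^ (-k) * (y⁻¹ * y⁻¹) := by
    rw [show -k - 1 - 1 = -k + (-1) + (-1) by ring, Real.rpow_add hy0, Real.rpow_add hy0,
      Real.rpow_neg_one]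
    ring
  rw [e1, e2]
  have h1y : (0 : ℝ) < 1 / y := by positivity
  have H := hode (1 / y) h1y
  have key : σ ^ 2 / 2 * y ^ 2 *
        (-k * ((-k - 1) * (y⁻¹ * y⁻¹)) * u (1 / y)
          + -k * y⁻¹ * (u' (1 / y) * -(1 / y ^ 2))
          + (-k * y⁻¹ * (u' (1 / y) * -(1 / y ^ 2))
            + (u'' (1 / y) * -(1 / y ^ 2) * -(1 / y ^ 2) + u' (1 / y) * (2 / y ^ 3))))
      + (b * y - 1) * (-k * y⁻¹ * u (1 / y) + u' (1 / y) * -(1 / y ^ 2))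
      - lam * u (1 / y) = 0 := by
    linear_combination (norm := skip) (1 / y) * H + u (1 / y) * hk
      - (u' (1 / y) / y + k * u (1 / y)) * hb
    field_simp
    ring
  linear_combination y ^ (-k) * key
end

section
/- For μ ∈ ℝ, σ > 0, λ > 0 and k = (μ + √(μ² + 2λσ²))/σ², the function P(y) = (1/λ)·(2/(yσ²))^k · (Γ(1 − 2μ/σ² + k)/Γ(1 − 2μ/σ² + 2k)) · M(k, 1 − 2μ/σ² + 2k, −2/(yσ²)) satisfies the ODE (σ²/2)·y²·P''(y) + ((μ + σ²/2)·y − 1)·P'(y) − λ·P(y) = 0 for all y > 0. -/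
open Complex

namespace PODE


/-- coefficients of the Kummer series -/
noncomputable def cr (a b : ℝ) (n : ℕ) : ℝ :=
  (ascPochhammer ℝ n).eval a / ((ascPochhammer ℝ n).eval b * (Nat.factorial n : ℝ))

noncomputable def W0 (a b : ℝ) (z : ℂ) : ℂ := ∑' n : ℕ, ((cr a b n : ℝ) : ℂ) * z ^ n

noncomputable def W1 (a b : ℝ) (z : ℂ) : ℂ :=
  ∑' n : ℕ, ((((n : ℝ) + 1) * cr a b (n + 1) : ℝ) : ℂ) * z ^ n

noncomputable def W2 (a b : ℝ) (z : ℂ) : ℂ :=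
  ∑' n : ℕ, ((((n : ℝ) + 1) * ((((n + 1 : ℕ) : ℝ) + 1) * cr a b (n + 1 + 1)) : ℝ) : ℂ) * z ^ n

lemma key_summable (e : ℕ → ℝ) (he : ∀ n, |e n| ≤ 2 ^ n / (Nat.factorial n : ℝ)) (z : ℂ) :
    Summable fun n : ℕ => ((e n : ℝ) : ℂ) * z ^ n := by
  apply Summable.of_norm
  have hcomp : ∀ n : ℕ, ‖((e n : ℝ) : ℂ) * z ^ n‖ ≤ (2 * ‖z‖) ^ n / (Nat.factorial n : ℝ) := by
    intro n
    rw [norm_mul, norm_pow, Complex.norm_real, mul_pow]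
    calc |e n| * ‖z‖ ^ n ≤ (2 ^ n / (Nat.factorial n : ℝ)) * ‖z‖ ^ n :=
          mul_le_mul_of_nonneg_right (he n) (by positivity)
      _ = 2 ^ n * ‖z‖ ^ n / (Nat.factorial n : ℝ) := by ring
  exact Summable.of_nonneg_of_le (fun n => norm_nonneg _) hcomp
    (Real.summable_pow_div_factorial _)

lemma key_hasDerivAt (e : ℕ → ℝ) (he : ∀ n, |e n| ≤ 2 ^ n / (Nat.factorial n : ℝ)) (z : ℂ) :
    HasDerivAt (fun w => ∑' n : ℕ, ((e n : ℝ) : ℂ) * w ^ n)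
      (∑' n : ℕ, ((((n : ℝ) + 1) * e (n + 1) : ℝ) : ℂ) * z ^ n) z := by
  set R : ℝ := ‖z‖ + 1 with hR
  have hR1 : 1 ≤ R := by have := norm_nonneg z; rw [hR]; linarith
  have hzR : z ∈ Metric.ball (0 : ℂ) R := by
    simp [hR, Metric.mem_ball, dist_eq_norm]
  have hbound : ∀ (n : ℕ) (w : ℂ), w ∈ Metric.ball (0 : ℂ) R →
      ‖((e n : ℝ) : ℂ) * ((n : ℂ) * w ^ (n - 1))‖ ≤ (4 * R) ^ n / (Nat.factorial n : ℝ) := by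
    intro n w hw
    have hwR : ‖w‖ ≤ R := by
      simp only [Metric.mem_ball, dist_eq_norm, sub_zero] at hw; linarith
    have h1 : ‖((e n : ℝ) : ℂ) * ((n : ℂ) * w ^ (n - 1))‖ = |e n| * ((n : ℝ) * ‖w‖ ^ (n - 1)) := by
      simp [norm_mul, norm_pow, Complex.norm_real, Complex.norm_natCast]
    rw [h1]
    have h2 : ‖w‖ ^ (n - 1) ≤ R ^ n := by
      calc ‖w‖ ^ (n - 1) ≤ R ^ (n - 1) :=
            pow_le_pow_left₀ (norm_nonneg _) hwR _
        _ ≤ R ^ n := pow_le_pow_right₀ (by linarith) (Nat.sub_le _ _)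
    have h3 : (n : ℝ) ≤ 2 ^ n := by
      exact_mod_cast (Nat.lt_two_pow_self (n := n)).le
    calc |e n| * ((n : ℝ) * ‖w‖ ^ (n - 1))
        ≤ (2 ^ n / (Nat.factorial n : ℝ)) * (2 ^ n * R ^ n) := by
          apply mul_le_mul (he n) ?_ (by positivity) (by positivity)
          apply mul_le_mul h3 h2 (by positivity) (by positivity)
      _ = (2 * (2 * R)) ^ n / (Nat.factorial n : ℝ) := by rw [mul_pow, mul_pow]; ring
      _ = (4 * R) ^ n / (Nat.factorial n : ℝ) := by rw [show (2 : ℝ) * (2 * R) = 4 * R by ring]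
  have h := hasDerivAt_tsum_of_isPreconnected
    (u := fun n => (4 * R) ^ n / (Nat.factorial n : ℝ))
    (Real.summable_pow_div_factorial _) Metric.isOpen_ball
    (g := fun n w => ((e n : ℝ) : ℂ) * w ^ n)
    (g' := fun n w => ((e n : ℝ) : ℂ) * ((n : ℂ) * w ^ (n - 1)))
    ((convex_ball (0 : ℂ) R).isPreconnected)
    (fun n w _ => (hasDerivAt_pow n w).const_mul _)
    hbound (Metric.mem_ball_self (by linarith)) (key_summable e he 0) hzR
  have hsum : Summable fun n : ℕ => ((e n : ℝ) : ℂ) * ((n : ℂ) * z ^ (n - 1)) := by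
    apply Summable.of_norm
    exact Summable.of_nonneg_of_le (fun n => norm_nonneg _)
      (fun n => hbound n z hzR) (Real.summable_pow_div_factorial _)
  have heq : (∑' n : ℕ, ((e n : ℝ) : ℂ) * ((n : ℂ) * z ^ (n - 1)))
      = ∑' n : ℕ, ((((n : ℝ) + 1) * e (n + 1) : ℝ) : ℂ) * z ^ n := by
    rw [Summable.tsum_eq_zero_add hsum]
    simp only [Nat.cast_zero, zero_mul, mul_zero, zero_add, pow_zero]
    apply tsum_congr
    intro n
    push_cast
    ring_nf
  rw [← heq]
  exact h

lemma asc_le {a b : ℝ} (ha : 0 < a) (hab : a ≤ b) (n : ℕ) :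
    (ascPochhammer ℝ n).eval a ≤ (ascPochhammer ℝ n).eval b := by
  induction n with
  | zero => simp
  | succ n ih =>
    rw [ascPochhammer_succ_eval, ascPochhammer_succ_eval]
    have h1 : 0 < (ascPochhammer ℝ n).eval a := ascPochhammer_pos n a ha
    have h2 : (0:ℝ) < a + n := by positivity
    exact mul_le_mul ih (by linarith) h2.le (le_trans h1.le ih)

lemma cr_pos {a b : ℝ} (ha : 0 < a) (hab : a ≤ b) (n : ℕ) : 0 < cr a b n := by
  have h1 : 0 < (ascPochhammer ℝ n).eval a := ascPochhammer_pos n a ha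
  have h2 : 0 < (ascPochhammer ℝ n).eval b := ascPochhammer_pos n b (lt_of_lt_of_le ha hab)
  have h3 : (0:ℝ) < (Nat.factorial n : ℝ) := by positivity
  exact div_pos h1 (by positivity)

lemma cr_le {a b : ℝ} (ha : 0 < a) (hab : a ≤ b) (n : ℕ) :
    cr a b n ≤ 1 / (Nat.factorial n : ℝ) := by
  have h2 : 0 < (ascPochhammer ℝ n).eval b := ascPochhammer_pos n b (lt_of_lt_of_le ha hab)
  have h3 : (0:ℝ) < (Nat.factorial n : ℝ) := by positivity
  rw [cr, div_le_div_iff₀ (by positivity) h3]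
  calc (ascPochhammer ℝ n).eval a * (Nat.factorial n : ℝ)
      ≤ (ascPochhammer ℝ n).eval b * (Nat.factorial n : ℝ) :=
        mul_le_mul_of_nonneg_right (asc_le ha hab n) h3.le
    _ = 1 * ((ascPochhammer ℝ n).eval b * (Nat.factorial n : ℝ)) := by ring

lemma cr_abs_le {a b : ℝ} (ha : 0 < a) (hab : a ≤ b) (n : ℕ) :
    |cr a b n| ≤ 2 ^ n / (Nat.factorial n : ℝ) := by
  rw [abs_of_pos (cr_pos ha hab n)]
  calc cr a b n ≤ 1 / (Nat.factorial n : ℝ) := cr_le ha hab n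
    _ ≤ 2 ^ n / (Nat.factorial n : ℝ) := by
        apply div_le_div_of_nonneg_right ?_ ?_
        · exact_mod_cast Nat.one_le_two_pow
        · positivity

lemma cr_rec {a b : ℝ} (ha : 0 < a) (hab : a ≤ b) (n : ℕ) :
    ((b + n) * (n + 1)) * cr a b (n + 1) = (a + n) * cr a b n := by
  have h2 : 0 < (ascPochhammer ℝ n).eval b := ascPochhammer_pos n b (lt_of_lt_of_le ha hab)
  have h3 : (0:ℝ) < (Nat.factorial n : ℝ) := by positivity
  have hb : (0:ℝ) < b + n := by have := lt_of_lt_of_le ha hab; positivity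
  rw [cr, cr, ascPochhammer_succ_eval, ascPochhammer_succ_eval, Nat.factorial_succ]
  push_cast
  field_simp

lemma cr_abs' {a b : ℝ} (ha : 0 < a) (hab : a ≤ b) (n : ℕ) : |cr a b n| = cr a b n :=
  abs_of_pos (cr_pos ha hab n)

/-- generic bound: |c * cr a b m| ≤ 2^n/n! whenever 0 ≤ c and c / m! ≤ 2^n/n! -/
lemma bound_helper {a b : ℝ} (ha : 0 < a) (hab : a ≤ b) (c : ℝ) (hc : 0 ≤ c) (m n : ℕ)
    (h : c * (1 / (Nat.factorial m : ℝ)) ≤ 2 ^ n / (Nat.factorial n : ℝ)) :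
    |c * cr a b m| ≤ 2 ^ n / (Nat.factorial n : ℝ) := by
  rw [abs_mul, cr_abs' ha hab, _root_.abs_of_nonneg hc]
  calc c * cr a b m ≤ c * (1 / (Nat.factorial m : ℝ)) :=
        mul_le_mul_of_nonneg_left (cr_le ha hab m) hc
    _ ≤ _ := h

lemma e1_bound {a b : ℝ} (ha : 0 < a) (hab : a ≤ b) (n : ℕ) :
    |((n : ℝ) + 1) * cr a b (n + 1)| ≤ 2 ^ n / (Nat.factorial n : ℝ) := by
  apply bound_helper ha hab _ (by positivity)
  rw [Nat.factorial_succ]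
  have h3 : (0:ℝ) < (Nat.factorial n : ℝ) := by positivity
  have h1 : ((n:ℝ) + 1) * (1 / (((n+1) * Nat.factorial n : ℕ) : ℝ)) = 1 / (Nat.factorial n : ℝ) := by
    push_cast
    field_simp
  rw [h1]
  gcongr
  exact_mod_cast Nat.one_le_two_pow

lemma e2_bound {a b : ℝ} (ha : 0 < a) (hab : a ≤ b) (n : ℕ) :
    |((n : ℝ) + 1) * ((((n + 1 : ℕ) : ℝ) + 1) * cr a b (n + 1 + 1))| ≤ 2 ^ n / (Nat.factorial n : ℝ) := by
  rw [show ((n : ℝ) + 1) * ((((n + 1 : ℕ) : ℝ) + 1) * cr a b (n + 1 + 1))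
      = (((n : ℝ) + 1) * (((n + 1 : ℕ) : ℝ) + 1)) * cr a b (n + 1 + 1) by ring]
  apply bound_helper ha hab _ (by positivity)
  rw [Nat.factorial_succ (n+1), Nat.factorial_succ n]
  have h3 : (0:ℝ) < (Nat.factorial n : ℝ) := by positivity
  have h1 : (((n:ℝ) + 1) * (((n + 1 : ℕ) : ℝ) + 1)) *
      (1 / (((n + 1 + 1) * ((n + 1) * Nat.factorial n) : ℕ) : ℝ)) = 1 / (Nat.factorial n : ℝ) := by
    push_cast
    field_simp
  rw [h1]
  gcongr
  exact_mod_cast Nat.one_le_two_pow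

lemma g1_bound {a b : ℝ} (ha : 0 < a) (hab : a ≤ b) (n : ℕ) :
    |(n : ℝ) * cr a b n| ≤ 2 ^ n / (Nat.factorial n : ℝ) := by
  apply bound_helper ha hab _ (by positivity)
  rw [mul_one_div]
  gcongr
  exact_mod_cast (Nat.lt_two_pow_self (n := n)).le

lemma g2_bound {a b : ℝ} (ha : 0 < a) (hab : a ≤ b) (n : ℕ) :
    |(n : ℝ) * (((n : ℝ) + 1) * cr a b (n + 1))| ≤ 2 ^ n / (Nat.factorial n : ℝ) := by
  rw [show (n : ℝ) * (((n : ℝ) + 1) * cr a b (n + 1))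
      = ((n : ℝ) * ((n : ℝ) + 1)) * cr a b (n + 1) by ring]
  apply bound_helper ha hab _ (by positivity)
  rw [Nat.factorial_succ]
  have h3 : (0:ℝ) < (Nat.factorial n : ℝ) := by positivity
  have h1 : ((n:ℝ) * ((n:ℝ) + 1)) * (1 / (((n+1) * Nat.factorial n : ℕ) : ℝ))
      = (n : ℝ) / (Nat.factorial n : ℝ) := by
    push_cast
    field_simp
  rw [h1, div_le_div_iff₀ h3 h3]
  have : (n : ℝ) ≤ 2 ^ n := by exact_mod_cast (Nat.lt_two_pow_self (n := n)).le
  nlinarith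

lemma kummer_ode {a b : ℝ} (ha : 0 < a) (hab : a ≤ b) (z : ℂ) :
    z * W2 a b z + ((b : ℂ) - z) * W1 a b z - (a : ℂ) * W0 a b z = 0 := by
  set f2 : ℕ → ℂ := fun n => (((n : ℝ) * (((n : ℝ) + 1) * cr a b (n + 1)) : ℝ) : ℂ) * z ^ n with hf2
  set f1 : ℕ → ℂ := fun n => (((n : ℝ) * cr a b n : ℝ) : ℂ) * z ^ n with hf1
  set fb : ℕ → ℂ := fun n => ((b * (((n : ℝ) + 1) * cr a b (n + 1)) : ℝ) : ℂ) * z ^ n with hfb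
  set fa : ℕ → ℂ := fun n => ((a * cr a b n : ℝ) : ℂ) * z ^ n with hfa
  have S2 : Summable f2 := key_summable _ (g2_bound ha hab) z
  have S1 : Summable f1 := key_summable _ (g1_bound ha hab) z
  have SW1 : Summable fun n : ℕ => ((((n : ℝ) + 1) * cr a b (n + 1) : ℝ) : ℂ) * z ^ n :=
    key_summable _ (e1_bound ha hab) z
  have SW0 : Summable fun n : ℕ => ((cr a b n : ℝ) : ℂ) * z ^ n :=
    key_summable _ (cr_abs_le ha hab) z
  have Sb : Summable fb := by
    have := SW1.mul_left (b : ℂ)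
    apply this.congr
    intro n
    simp only [hfb]
    push_cast
    ring
  have Sa : Summable fa := by
    have := SW0.mul_left (a : ℂ)
    apply this.congr
    intro n
    simp only [hfa]
    push_cast
    ring
  have h2 : z * W2 a b z = ∑' n, f2 n := by
    rw [W2, ← tsum_mul_left, Summable.tsum_eq_zero_add S2]
    have hz0 : f2 0 = 0 := by simp [hf2]
    rw [hz0, zero_add]
    apply tsum_congr
    intro n
    simp only [hf2]
    push_cast
    ring
  have h1 : z * W1 a b z = ∑' n, f1 n := by
    rw [W1, ← tsum_mul_left, Summable.tsum_eq_zero_add S1]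
    have hz0 : f1 0 = 0 := by simp [hf1]
    rw [hz0, zero_add]
    apply tsum_congr
    intro n
    simp only [hf1]
    push_cast
    ring
  have hbW : (b : ℂ) * W1 a b z = ∑' n, fb n := by
    rw [W1, ← tsum_mul_left]
    apply tsum_congr
    intro n
    simp only [hfb]
    push_cast
    ring
  have haW : (a : ℂ) * W0 a b z = ∑' n, fa n := by
    rw [W0, ← tsum_mul_left]
    apply tsum_congr
    intro n
    simp only [hfa]
    push_cast
    ring
  have key : ∀ n : ℕ, f2 n + fb n - (f1 n + fa n) = 0 := by
    intro n
    have h := cr_rec ha hab n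
    have h' := congrArg (fun x : ℝ => ((x : ℝ) : ℂ) * z ^ n) h
    push_cast at h'
    simp only [hf2, hfb, hf1, hfa]
    push_cast
    linear_combination h'
  have main : z * W2 a b z + ((b : ℂ) - z) * W1 a b z - (a : ℂ) * W0 a b z
      = (∑' n, f2 n + ∑' n, fb n) - (∑' n, f1 n + ∑' n, fa n) := by
    rw [← h2, ← h1, ← hbW, ← haW]
    ring
  rw [main, ← Summable.tsum_add S2 Sb, ← Summable.tsum_add S1 Sa, ← Summable.tsum_sub (S2.add Sb) (S1.add Sa)]
  have : (fun n => f2 n + fb n - (f1 n + fa n)) = fun _ : ℕ => (0 : ℂ) := funext key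
  rw [this, tsum_zero]

lemma kummerM_eq (a b : ℝ) (z : ℂ) : kummerM (a : ℂ) (b : ℂ) z = W0 a b z := by
  rw [kummerM, W0]
  apply tsum_congr
  intro n
  have hmap : (ascPochhammer ℂ n) = (ascPochhammer ℝ n).map (algebraMap ℝ ℂ) :=
    (ascPochhammer_map (algebraMap ℝ ℂ) n).symm
  have ea : (ascPochhammer ℂ n).eval (a : ℂ) = (((ascPochhammer ℝ n).eval a : ℝ) : ℂ) := by
    rw [hmap, Polynomial.eval_map]
    exact Polynomial.eval₂_at_apply (algebraMap ℝ ℂ) _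
  have eb : (ascPochhammer ℂ n).eval (b : ℂ) = (((ascPochhammer ℝ n).eval b : ℝ) : ℂ) := by
    rw [hmap, Polynomial.eval_map]
    exact Polynomial.eval₂_at_apply (algebraMap ℝ ℂ) _
  rw [ea, eb, cr]
  push_cast
  ring


lemma hasDerivAt_W0 {a b : ℝ} (ha : 0 < a) (hab : a ≤ b) (z : ℂ) :
    HasDerivAt (W0 a b) (W1 a b z) z :=
  key_hasDerivAt (cr a b) (cr_abs_le ha hab) z

lemma hasDerivAt_W1 {a b : ℝ} (ha : 0 < a) (hab : a ≤ b) (z : ℂ) :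
    HasDerivAt (W1 a b) (W2 a b z) z :=
  key_hasDerivAt (fun m => ((m : ℝ) + 1) * cr a b (m + 1)) (e1_bound ha hab) z

end PODE

set_option maxHeartbeats 2000000 in
open PODE in
theorem P_solves_ode (μ σ lam k : ℝ) (hσ : 0 < σ) (hlam : 0 < lam)
    (hk : k = (μ + Real.sqrt (μ ^ 2 + 2 * lam * σ ^ 2)) / σ ^ 2)
    (P : ℝ → ℂ)
    (hP : ∀ y : ℝ, 0 < y → P y =
      (1 / (lam : ℂ)) * (2 / (y * σ ^ 2) : ℂ) ^ (k : ℂ) *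
        (Complex.Gamma (1 - 2 * μ / σ ^ 2 + k) / Complex.Gamma (1 - 2 * μ / σ ^ 2 + 2 * k)) *
        kummerM k (1 - 2 * μ / σ ^ 2 + 2 * k) (-2 / (y * σ ^ 2))) :
    ∀ y : ℝ, 0 < y →
      (σ ^ 2 / 2 : ℂ) * y ^ 2 * deriv (deriv P) y
        + ((μ + σ ^ 2 / 2 : ℝ) * y - 1 : ℝ) * deriv P y - lam * P y = 0 := by
  intro y hy
  have hσ2 : (0:ℝ) < σ ^ 2 := by positivity
  have hσ2' : (σ:ℝ) ^ 2 ≠ 0 := ne_of_gt hσ2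
  have hsqnn : (0:ℝ) ≤ μ ^ 2 + 2 * lam * σ ^ 2 := by positivity
  have hsq : Real.sqrt (μ ^ 2 + 2 * lam * σ ^ 2) = k * σ ^ 2 - μ := by
    rw [hk]; field_simp; ring
  have h2lam : μ ^ 2 + 2 * lam * σ ^ 2 = (k * σ ^ 2 - μ) ^ 2 := by
    rw [← hsq, Real.sq_sqrt hsqnn]
  have hlamk : 2 * lam = σ ^ 2 * k ^ 2 - 2 * μ * k := by
    have h3 : (2 * lam - (σ ^ 2 * k ^ 2 - 2 * μ * k)) * σ ^ 2 = 0 := by linear_combination h2lam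
    rcases mul_eq_zero.1 h3 with h | h
    · linarith [sub_eq_zero.1 h]
    · exact absurd h hσ2'
  have hsqabs : |μ| < Real.sqrt (μ ^ 2 + 2 * lam * σ ^ 2) := by
    have h1 : Real.sqrt (μ ^ 2) < Real.sqrt (μ ^ 2 + 2 * lam * σ ^ 2) :=
      Real.sqrt_lt_sqrt (by positivity) (by nlinarith)
    calc |μ| = Real.sqrt (μ ^ 2) := (Real.sqrt_sq_eq_abs μ).symm
      _ < _ := h1
  have hk0 : 0 < k := by
    rw [hk]
    apply div_pos ?_ hσ2
    have h1 := neg_abs_le μ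
    linarith
  set b : ℝ := 1 - 2 * μ / σ ^ 2 + 2 * k with hbdef
  have hkb : k ≤ b := by
    have h5 : μ < k * σ ^ 2 - μ := by
      rw [← hsq]; linarith [le_abs_self μ]
    have h6 : 2 * μ / σ ^ 2 ≤ k := by
      rw [div_le_iff₀ hσ2]; linarith
    rw [hbdef]; linarith
  have hy0 : (y:ℂ) ≠ 0 := Complex.ofReal_ne_zero.mpr hy.ne'
  have hσ0 : ((σ:ℂ)) ^ 2 ≠ 0 := by
    simpa using pow_ne_zero 2 (Complex.ofReal_ne_zero.mpr hσ.ne')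
  have hlam0 : ((lam:ℂ)) ≠ 0 := Complex.ofReal_ne_zero.mpr hlam.ne'
  set Γc : ℂ := Complex.Gamma (1 - 2 * (μ:ℂ) / (σ:ℂ) ^ 2 + (k:ℂ)) /
      Complex.Gamma (1 - 2 * (μ:ℂ) / (σ:ℂ) ^ 2 + 2 * (k:ℂ)) with hΓc
  -- the function F and its derivatives
  set F : ℂ → ℂ := fun z =>
    1 / (lam:ℂ) * (2 / (z * (σ:ℂ) ^ 2)) ^ (k:ℂ) * Γc * W0 k b (-(2 / (z * (σ:ℂ) ^ 2)))
    with hFdef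
  have hPF : ∀ t : ℝ, 0 < t → P t = F ↑t := by
    intro t ht
    rw [hP t ht]
    have e1 : ((1:ℂ) - 2 * ↑μ / ↑σ ^ 2 + 2 * ↑k) = ((b:ℝ):ℂ) := by
      rw [hbdef]; push_cast; ring
    have e2 : (-2 : ℂ) / ((t:ℂ) * (σ:ℂ) ^ 2) = -(2 / ((t:ℂ) * (σ:ℂ) ^ 2)) := by ring
    rw [e1, kummerM_eq, e2, hFdef]
  -- slit plane
  have hslit : ∀ t : ℝ, 0 < t → (2 / ((t:ℂ) * (σ:ℂ) ^ 2)) ∈ Complex.slitPlane := by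
    intro t ht
    have e3 : (2 / ((t:ℂ) * (σ:ℂ) ^ 2)) = (((2 / (t * σ ^ 2) : ℝ)) : ℂ) := by push_cast; ring
    rw [e3]
    apply Or.inl
    simp only [Complex.ofReal_re]
    positivity
  -- derivative of A
  have hAd : ∀ z : ℂ, z ≠ 0 → HasDerivAt (fun w : ℂ => 2 / (w * (σ:ℂ) ^ 2))
      (-(2 / ((σ:ℂ) ^ 2 * z ^ 2))) z := by
    intro z hz
    have h := HasDerivAt.const_mul (2 / (σ:ℂ) ^ 2) ((hasDerivAt_id z).inv hz)
    have hfun : (fun w : ℂ => 2 / (σ:ℂ) ^ 2 * (id w)⁻¹) = fun w : ℂ => 2 / (w * (σ:ℂ) ^ 2) := by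
      funext w
      simp only [id, div_eq_mul_inv, mul_inv]
      ring
    simp only [Pi.inv_apply] at h
    rw [hfun] at h
    refine h.congr_deriv ?_
    simp only [id]
    field_simp
  -- derivative of dA
  have hdAd : ∀ z : ℂ, z ≠ 0 → HasDerivAt (fun w : ℂ => -(2 / ((σ:ℂ) ^ 2 * w ^ 2)))
      (4 / ((σ:ℂ) ^ 2 * z ^ 3)) z := by
    intro z hz
    have hne : (σ:ℂ) ^ 2 * z ^ 2 ≠ 0 := mul_ne_zero hσ0 (pow_ne_zero 2 hz)
    have hden : HasDerivAt (fun w : ℂ => (σ:ℂ) ^ 2 * w ^ 2) ((σ:ℂ) ^ 2 * (2 * z ^ 1)) z := by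
      have := (hasDerivAt_pow 2 z).const_mul ((σ:ℂ) ^ 2)
      refine this.congr_deriv ?_
      norm_num
    have h := ((hasDerivAt_const z (2:ℂ)).div hden hne).neg
    refine h.congr_deriv ?_
    field_simp
    try ring
  -- first derivative function
  set G1 : ℂ → ℂ := fun z =>
    1 / (lam:ℂ) * ((k:ℂ) * (2 / (z * (σ:ℂ) ^ 2)) ^ ((k:ℂ) - 1) * -(2 / ((σ:ℂ) ^ 2 * z ^ 2))) * Γc
        * W0 k b (-(2 / (z * (σ:ℂ) ^ 2)))
      + 1 / (lam:ℂ) * (2 / (z * (σ:ℂ) ^ 2)) ^ (k:ℂ) * Γc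
        * (W1 k b (-(2 / (z * (σ:ℂ) ^ 2))) * - -(2 / ((σ:ℂ) ^ 2 * z ^ 2)))
    with hG1def
  have hFd : ∀ z : ℂ, z ≠ 0 → (2 / (z * (σ:ℂ) ^ 2)) ∈ Complex.slitPlane →
      HasDerivAt F (G1 z) z := by
    intro z hz hsl
    have hB0 : HasDerivAt (fun w : ℂ => (2 / (w * (σ:ℂ) ^ 2)) ^ (k:ℂ))
        ((k:ℂ) * (2 / (z * (σ:ℂ) ^ 2)) ^ ((k:ℂ) - 1) * -(2 / ((σ:ℂ) ^ 2 * z ^ 2))) z :=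
      (hAd z hz).cpow_const hsl
    have hN : HasDerivAt (fun w : ℂ => -(2 / (w * (σ:ℂ) ^ 2))) (- -(2 / ((σ:ℂ) ^ 2 * z ^ 2))) z :=
      (hAd z hz).neg
    have hW0c : HasDerivAt (fun w : ℂ => W0 k b (-(2 / (w * (σ:ℂ) ^ 2))))
        (W1 k b (-(2 / (z * (σ:ℂ) ^ 2))) * - -(2 / ((σ:ℂ) ^ 2 * z ^ 2))) z :=
      (hasDerivAt_W0 hk0 hkb _).comp z hN
    have h1 := (HasDerivAt.const_mul (1 / (lam:ℂ)) hB0).mul_const Γc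
    exact h1.mul hW0c
  -- deriv P = G1 on Ioi 0
  have hev1 : ∀ t : ℝ, 0 < t → deriv P t = G1 ↑t := by
    intro t ht
    have hev : P =ᶠ[nhds t] fun s : ℝ => F ↑s := by
      filter_upwards [Ioi_mem_nhds ht] with s hs using hPF s hs
    rw [hev.deriv_eq]
    exact ((hFd ↑t (Complex.ofReal_ne_zero.mpr ht.ne') (hslit t ht)).comp_ofReal).deriv
  -- second derivative of G1 at y
  have hyC0 : (y:ℂ) ≠ 0 := hy0
  have hG1d := by
    have hB1 : HasDerivAt (fun w : ℂ => (2 / (w * (σ:ℂ) ^ 2)) ^ ((k:ℂ) - 1))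
        (((k:ℂ) - 1) * (2 / ((y:ℂ) * (σ:ℂ) ^ 2)) ^ ((k:ℂ) - 1 - 1) * -(2 / ((σ:ℂ) ^ 2 * (y:ℂ) ^ 2)))
        (y:ℂ) := (hAd _ hyC0).cpow_const (hslit y hy)
    have hB0 : HasDerivAt (fun w : ℂ => (2 / (w * (σ:ℂ) ^ 2)) ^ (k:ℂ))
        ((k:ℂ) * (2 / ((y:ℂ) * (σ:ℂ) ^ 2)) ^ ((k:ℂ) - 1) * -(2 / ((σ:ℂ) ^ 2 * (y:ℂ) ^ 2)))
        (y:ℂ) := (hAd _ hyC0).cpow_const (hslit y hy)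
    have hN : HasDerivAt (fun w : ℂ => -(2 / (w * (σ:ℂ) ^ 2)))
        (- -(2 / ((σ:ℂ) ^ 2 * (y:ℂ) ^ 2))) (y:ℂ) := (hAd _ hyC0).neg
    have hW0c : HasDerivAt (fun w : ℂ => W0 k b (-(2 / (w * (σ:ℂ) ^ 2))))
        (W1 k b (-(2 / ((y:ℂ) * (σ:ℂ) ^ 2))) * - -(2 / ((σ:ℂ) ^ 2 * (y:ℂ) ^ 2))) (y:ℂ) :=
      (hasDerivAt_W0 hk0 hkb _).comp _ hN
    have hW1c : HasDerivAt (fun w : ℂ => W1 k b (-(2 / (w * (σ:ℂ) ^ 2))))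
        (W2 k b (-(2 / ((y:ℂ) * (σ:ℂ) ^ 2))) * - -(2 / ((σ:ℂ) ^ 2 * (y:ℂ) ^ 2))) (y:ℂ) :=
      (hasDerivAt_W1 hk0 hkb _).comp _ hN
    have hdA : HasDerivAt (fun w : ℂ => -(2 / ((σ:ℂ) ^ 2 * w ^ 2)))
        (4 / ((σ:ℂ) ^ 2 * (y:ℂ) ^ 3)) (y:ℂ) := hdAd _ hyC0
    have t1 := ((HasDerivAt.const_mul (1 / (lam:ℂ))
        (((hB1.const_mul ((k:ℂ))).mul hdA))).mul_const Γc).mul hW0c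
    have t2 := ((HasDerivAt.const_mul (1 / (lam:ℂ)) hB0).mul_const Γc).mul
        (hW1c.mul hdA.neg)
    exact (show HasDerivAt G1 _ (y:ℂ) from t1.add t2)
  have hG1R := hG1d.comp_ofReal
  have hev2 : deriv P =ᶠ[nhds y] fun t : ℝ => G1 ↑t := by
    filter_upwards [Ioi_mem_nhds hy] with s hs using hev1 s hs
  rw [hev2.deriv_eq, hG1R.deriv, hev1 y hy, hPF y hy]
  clear hP hPF hev1 hev2 hG1R hG1d hFd hAd hdAd hslit hsq h2lam hsqabs hsqnn hk hΓc
  simp only [hG1def, hFdef, Pi.mul_apply, Pi.neg_apply]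
  have hbC : ((b:ℝ):ℂ) = 1 - 2*(μ:ℂ)/(σ:ℂ)^2 + 2*(k:ℂ) := by
    rw [hbdef]; push_cast; ring
  have hode := kummer_ode hk0 hkb (-(2/((y:ℂ)*(σ:ℂ)^2)))
  rw [hbC] at hode
  have hA0 : (2/((y:ℂ)*(σ:ℂ)^2)) ≠ 0 := div_ne_zero two_ne_zero (mul_ne_zero hy0 hσ0)
  have hp1 : (2/((y:ℂ)*(σ:ℂ)^2))^((k:ℂ)-1) = (2/((y:ℂ)*(σ:ℂ)^2))^((k:ℂ)-1-1) * (2/((y:ℂ)*(σ:ℂ)^2)) := by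
    conv_lhs => rw [show (k:ℂ)-1 = ((k:ℂ)-1-1)+1 by ring]
    rw [Complex.cpow_add _ _ hA0, Complex.cpow_one]
  have hp0 : (2/((y:ℂ)*(σ:ℂ)^2))^(k:ℂ) = (2/((y:ℂ)*(σ:ℂ)^2))^((k:ℂ)-1-1) * (2/((y:ℂ)*(σ:ℂ)^2))^(2:ℕ) := by
    conv_lhs => rw [show (k:ℂ) = ((k:ℂ)-1-1)+((2:ℕ):ℂ) by push_cast; ring]
    rw [Complex.cpow_add _ _ hA0, Complex.cpow_natCast]
  rw [hp1, hp0]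
  have hlamC : 2*(lam:ℂ) = (σ:ℂ)^2*(k:ℂ)^2 - 2*(μ:ℂ)*(k:ℂ) := by
    have h := congrArg (fun x : ℝ => (x : ℂ)) hlamk
    push_cast at h
    exact h
  set X := (2/((y:ℂ)*(σ:ℂ)^2))^((k:ℂ)-1-1) with hX
  set m0 := PODE.W0 k b (-(2/((y:ℂ)*(σ:ℂ)^2))) with hm0
  set m1 := PODE.W1 k b (-(2/((y:ℂ)*(σ:ℂ)^2))) with hm1
  set m2 := PODE.W2 k b (-(2/((y:ℂ)*(σ:ℂ)^2))) with hm2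
  clear_value Γc X m0 m1 m2
  clear hX hm0 hm1 hm2 F G1 hFdef hG1def
  have hYinv : (y:ℂ) * (y:ℂ)⁻¹ = 1 := mul_inv_cancel₀ hy0
  have hSinv : (σ:ℂ) * (σ:ℂ)⁻¹ = 1 := mul_inv_cancel₀ (Complex.ofReal_ne_zero.mpr hσ.ne')
  push_cast
  linear_combination ((-4:ℂ)*(σ:ℂ)^2*(σ:ℂ)⁻¹^6*(y:ℂ)⁻¹^3*(lam:ℂ)⁻¹*X*Γc) * hode +
  ((-2:ℂ)*(σ:ℂ)⁻¹^4*(y:ℂ)⁻¹^2*(lam:ℂ)⁻¹*X*Γc*m0) * hlamC +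
  ((-4:ℂ)*(σ:ℂ)⁻¹^4*(y:ℂ)⁻¹^2*(lam:ℂ)⁻¹*(k:ℂ)*(μ:ℂ)*X*Γc*m0 + (8:ℂ)*(σ:ℂ)⁻¹^6*(y:ℂ)⁻¹^3*(lam:ℂ)⁻¹*(μ:ℂ)*X*Γc*m1 + (2:ℂ)*(σ:ℂ)^2*(σ:ℂ)⁻¹^4*(y:ℂ)⁻¹^2*(lam:ℂ)⁻¹*(k:ℂ)^2*X*Γc*m0 + (2:ℂ)*(σ:ℂ)^2*(σ:ℂ)⁻¹^4*(y:ℂ)*(y:ℂ)⁻¹^3*(lam:ℂ)⁻¹*(k:ℂ)*X*Γc*m0 + (2:ℂ)*(σ:ℂ)^2*(σ:ℂ)⁻¹^4*(y:ℂ)*(y:ℂ)⁻¹^3*(lam:ℂ)⁻¹*(k:ℂ)^2*X*Γc*m0 + (-4:ℂ)*(σ:ℂ)^2*(σ:ℂ)⁻¹^6*(y:ℂ)⁻¹^3*(lam:ℂ)⁻¹*X*Γc*m1 + (-8:ℂ)*(σ:ℂ)^2*(σ:ℂ)⁻¹^6*(y:ℂ)⁻¹^3*(lam:ℂ)⁻¹*(k:ℂ)*X*Γc*m1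 + (-8:ℂ)*(σ:ℂ)^2*(σ:ℂ)⁻¹^6*(y:ℂ)*(y:ℂ)⁻¹^4*(lam:ℂ)⁻¹*X*Γc*m1 + (-8:ℂ)*(σ:ℂ)^2*(σ:ℂ)⁻¹^6*(y:ℂ)*(y:ℂ)⁻¹^4*(lam:ℂ)⁻¹*(k:ℂ)*X*Γc*m1 + (8:ℂ)*(σ:ℂ)^2*(σ:ℂ)⁻¹^8*(y:ℂ)⁻¹^4*(lam:ℂ)⁻¹*X*Γc*m2 + (8:ℂ)*(σ:ℂ)^2*(σ:ℂ)⁻¹^8*(y:ℂ)*(y:ℂ)⁻¹^5*(lam:ℂ)⁻¹*X*Γc*m2) * hYinv +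
  ((-4:ℂ)*(σ:ℂ)⁻¹^4*(y:ℂ)⁻¹^3*(lam:ℂ)⁻¹*(k:ℂ)*X*Γc*m0 + (-8:ℂ)*(σ:ℂ)⁻¹^6*(y:ℂ)⁻¹^3*(lam:ℂ)⁻¹*(μ:ℂ)*X*Γc*m1 + (8:ℂ)*(σ:ℂ)⁻¹^6*(y:ℂ)⁻¹^4*(lam:ℂ)⁻¹*X*Γc*m1 + (-4:ℂ)*(σ:ℂ)*(σ:ℂ)⁻¹^5*(y:ℂ)⁻¹^3*(lam:ℂ)⁻¹*(k:ℂ)*X*Γc*m0 + (-8:ℂ)*(σ:ℂ)*(σ:ℂ)⁻¹^7*(y:ℂ)⁻¹^3*(lam:ℂ)⁻¹*(μ:ℂ)*X*Γc*m1 + (8:ℂ)*(σ:ℂ)*(σ:ℂ)⁻¹^7*(y:ℂ)⁻¹^4*(lam:ℂ)⁻¹*X*Γc*m1) * hSinv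
end

section
/- With k = (μ + √(μ² + 2λσ²))/σ², the function P(y) = (1/λ)·(2/(yσ²))^k · (Γ(1 − 2μ/σ² + k)/Γ(1 − 2μ/σ² + 2k)) · M(k, 1 − 2μ/σ² + 2k, −2/(yσ²)) tends to 0 as y → ∞. -/
lemma poch_nonneg {c : ℝ} (hc : 0 ≤ c) (n : ℕ) : 0 ≤ (ascPochhammer ℝ n).eval c := by
  induction n with
  | zero => simp
  | succ n ih =>
    rw [ascPochhammer_succ_eval]
    have : (0:ℝ) ≤ c + n := by positivity
    positivity

lemma poch_norm_le (a : ℂ) (n : ℕ) :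
    ‖(ascPochhammer ℂ n).eval a‖ ≤ (ascPochhammer ℝ n).eval ‖a‖ := by
  induction n with
  | zero => simp
  | succ n ih =>
    rw [ascPochhammer_succ_eval, ascPochhammer_succ_eval]
    calc ‖(ascPochhammer ℂ n).eval a * (a + n)‖
        = ‖(ascPochhammer ℂ n).eval a‖ * ‖a + (n : ℂ)‖ := norm_mul _ _
      _ ≤ (ascPochhammer ℝ n).eval ‖a‖ * (‖a‖ + n) := by
          apply mul_le_mul ih _ (norm_nonneg _) (poch_nonneg (norm_nonneg a) n)
          calc ‖a + (n:ℂ)‖ ≤ ‖a‖ + ‖(n:ℂ)‖ := norm_add_le _ _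
            _ = ‖a‖ + n := by simp

lemma poch_ofReal (r : ℝ) (n : ℕ) :
    (ascPochhammer ℂ n).eval ((r : ℂ)) = (((ascPochhammer ℝ n).eval r : ℝ) : ℂ) := by
  induction n with
  | zero => simp
  | succ n ih => rw [ascPochhammer_succ_eval, ascPochhammer_succ_eval, ih]; push_cast; ring

lemma fact_le_poch {b : ℝ} (hb : 1 ≤ b) (n : ℕ) :
    (n.factorial : ℝ) ≤ (ascPochhammer ℝ n).eval b := by
  induction n with
  | zero => simp
  | succ n ih =>
    rw [ascPochhammer_succ_eval, Nat.factorial_succ]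
    push_cast
    have h1 : ((n:ℝ) + 1) ≤ b + n := by linarith
    have h2 : (0:ℝ) < (n.factorial : ℝ) := by positivity
    calc ((n:ℝ)+1) * n.factorial = (n.factorial : ℝ) * ((n:ℝ)+1) := by ring
      _ ≤ (ascPochhammer ℝ n).eval b * (b + n) :=
        mul_le_mul ih h1 (by positivity) (poch_nonneg (by linarith) n)

lemma summable_g {c : ℝ} (hc : 0 ≤ c) :
    Summable (fun n : ℕ => (ascPochhammer ℝ n).eval c / ((n.factorial : ℝ))^2) := by
  apply summable_of_ratio_norm_eventually_le (r := 1/2) (by norm_num)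
  filter_upwards [Filter.eventually_ge_atTop ⌈2*c⌉₊] with n hn
  have hcn : 2*c ≤ (n:ℝ) := le_trans (Nat.le_ceil _) (by exact_mod_cast hn)
  have hE : 0 ≤ (ascPochhammer ℝ n).eval c := poch_nonneg hc n
  have hf : (0:ℝ) < (n.factorial : ℝ) := by positivity
  have hkey : c + n ≤ (1/2) * ((n:ℝ)+1)^2 := by nlinarith [sq_nonneg ((n:ℝ))]
  rw [Real.norm_of_nonneg (div_nonneg (poch_nonneg hc _) (by positivity)),
    Real.norm_of_nonneg (div_nonneg (poch_nonneg hc _) (by positivity))]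
  rw [ascPochhammer_succ_eval, Nat.factorial_succ]
  push_cast
  have heq : (ascPochhammer ℝ n).eval c * (c + n) / ((((n:ℝ)+1) * n.factorial)^2)
      = ((ascPochhammer ℝ n).eval c / (n.factorial:ℝ)^2) * ((c + n) / ((n:ℝ)+1)^2) := by
    rw [div_mul_div_comm]
    congr 1
    rw [mul_pow]; ring
  rw [heq]
  have h2 : (c + (n:ℝ)) / ((n:ℝ)+1)^2 ≤ 1/2 := by
    rw [div_le_iff₀ (by positivity)]; nlinarith
  calc ((ascPochhammer ℝ n).eval c / (n.factorial:ℝ)^2) * ((c + n) / ((n:ℝ)+1)^2)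
      ≤ ((ascPochhammer ℝ n).eval c / (n.factorial:ℝ)^2) * (1/2) :=
        mul_le_mul_of_nonneg_left h2 (by positivity)
    _ = 1/2 * ((ascPochhammer ℝ n).eval c / (n.factorial:ℝ)^2) := by ring

lemma kummer_bound (a : ℂ) {bR : ℝ} (hb : 1 ≤ bR) (z : ℂ) (hz : ‖z‖ ≤ 1) :
    ‖kummerM a (bR : ℂ) z‖ ≤ ∑' n : ℕ, (ascPochhammer ℝ n).eval ‖a‖ / ((n.factorial : ℝ))^2 := by
  set f : ℕ → ℂ := fun n =>
    ((ascPochhammer ℂ n).eval a / (ascPochhammer ℂ n).eval (bR:ℂ)) * z ^ n / (n.factorial : ℂ)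
  set g : ℕ → ℝ := fun n => (ascPochhammer ℝ n).eval ‖a‖ / ((n.factorial : ℝ))^2
  have hgsum : Summable g := summable_g (norm_nonneg a)
  have hterm : ∀ n, ‖f n‖ ≤ g n := by
    intro n
    have hfact : (0:ℝ) < (n.factorial : ℝ) := by positivity
    have hbpos : (0:ℝ) < (ascPochhammer ℝ n).eval bR :=
      lt_of_lt_of_le hfact (fact_le_poch hb n)
    have hnormb : ‖(ascPochhammer ℂ n).eval (bR:ℂ)‖ = (ascPochhammer ℝ n).eval bR := by
      rw [poch_ofReal, Complex.norm_real, Real.norm_of_nonneg hbpos.le]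
    have h1 : ‖f n‖ = ‖(ascPochhammer ℂ n).eval a‖ / (ascPochhammer ℝ n).eval bR
        * ‖z‖^n / (n.factorial : ℝ) := by
      simp [f, norm_div, norm_mul, norm_pow, hnormb, Complex.norm_natCast]
    rw [h1]
    have h2 : ‖(ascPochhammer ℂ n).eval a‖ / (ascPochhammer ℝ n).eval bR
        ≤ (ascPochhammer ℝ n).eval ‖a‖ / (n.factorial : ℝ) :=
      div_le_div₀ (poch_nonneg (norm_nonneg a) n) (poch_norm_le a n) hfact (fact_le_poch hb n)
    have h3 : ‖z‖^n ≤ 1 := pow_le_one₀ (norm_nonneg z) hz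
    calc ‖(ascPochhammer ℂ n).eval a‖ / (ascPochhammer ℝ n).eval bR * ‖z‖^n / (n.factorial : ℝ)
        ≤ (ascPochhammer ℝ n).eval ‖a‖ / (n.factorial : ℝ) * 1 / (n.factorial : ℝ) :=
          div_le_div₀
            (by have := poch_nonneg (norm_nonneg a) n; positivity)
            (mul_le_mul h2 h3 (by positivity)
              (by have := poch_nonneg (norm_nonneg a) n; positivity)) hfact le_rfl
      _ = g n := by simp only [g]; rw [sq]; field_simp
  have hnsum : Summable (fun n => ‖f n‖) :=
    Summable.of_nonneg_of_le (fun n => norm_nonneg _) hterm hgsum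
  calc ‖kummerM a (bR:ℂ) z‖ = ‖∑' n, f n‖ := rfl
    _ ≤ ∑' n, ‖f n‖ := norm_tsum_le_tsum_norm hnsum
    _ ≤ ∑' n, g n := Summable.tsum_le_tsum hterm hnsum hgsum

theorem P_tendsto_zero_at_infty (μ σ lam k : ℝ) (hσ : 0 < σ) (hlam : 0 < lam)
    (hk : k = (μ + Real.sqrt (μ ^ 2 + 2 * lam * σ ^ 2)) / σ ^ 2) :
    Filter.Tendsto
      (fun y : ℝ =>
        (1 / (lam : ℂ)) * (2 / (y * σ ^ 2) : ℂ) ^ (k : ℂ) *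
          (Complex.Gamma (1 - 2 * μ / σ ^ 2 + k) / Complex.Gamma (1 - 2 * μ / σ ^ 2 + 2 * k)) *
          kummerM k (1 - 2 * μ / σ ^ 2 + 2 * k) (-2 / (y * σ ^ 2)))
      Filter.atTop (nhds 0) := by
  have hσ2 : (0:ℝ) < σ ^ 2 := by positivity
  have hsq : |μ| < Real.sqrt (μ ^ 2 + 2 * lam * σ ^ 2) := by
    rw [← Real.sqrt_sq_eq_abs]
    exact Real.sqrt_lt_sqrt (sq_nonneg μ) (by nlinarith)
  have hk0 : 0 < k := by
    rw [hk]; apply div_pos _ hσ2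
    have := neg_abs_le μ; linarith
  set bR : ℝ := 1 - 2 * μ / σ ^ 2 + 2 * k with hbR
  have hb1 : 1 ≤ bR := by
    have hs := Real.sqrt_nonneg (μ ^ 2 + 2 * lam * σ ^ 2)
    have : bR = 1 + 2 * Real.sqrt (μ ^ 2 + 2 * lam * σ ^ 2) / σ ^ 2 := by
      rw [hbR, hk]; field_simp; ring
    rw [this]
    have : 0 ≤ 2 * Real.sqrt (μ ^ 2 + 2 * lam * σ ^ 2) / σ ^ 2 := by positivity
    linarith
  -- rewrite the function
  have hfun : ∀ y : ℝ,
      (1 / (lam : ℂ)) * (2 / (y * σ ^ 2) : ℂ) ^ (k : ℂ) *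
          (Complex.Gamma (1 - 2 * μ / σ ^ 2 + k) / Complex.Gamma (1 - 2 * μ / σ ^ 2 + 2 * k)) *
          kummerM k (1 - 2 * μ / σ ^ 2 + 2 * k) (-2 / (y * σ ^ 2))
      = ((1 / (lam : ℂ)) * (2 / (y * σ ^ 2) : ℂ) ^ (k : ℂ) *
          (Complex.Gamma (1 - 2 * μ / σ ^ 2 + k) / Complex.Gamma (1 - 2 * μ / σ ^ 2 + 2 * k))) *
          kummerM k ((bR : ℝ) : ℂ) (((-2 / (y * σ ^ 2) : ℝ) : ℂ)) := by
    intro y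
    congr 1
    all_goals push_cast [hbR]
    all_goals try ring_nf
  simp only [hfun]
  -- first factor tends to zero
  have hF : Filter.Tendsto
      (fun y : ℝ => (1 / (lam : ℂ)) * (2 / (y * σ ^ 2) : ℂ) ^ (k : ℂ) *
          (Complex.Gamma (1 - 2 * μ / σ ^ 2 + k) / Complex.Gamma (1 - 2 * μ / σ ^ 2 + 2 * k)))
      Filter.atTop (nhds 0) := by
    have hreal : Filter.Tendsto (fun y : ℝ => (2 / (y * σ ^ 2)) ^ k) Filter.atTop (nhds 0) := by
      have h1 : Filter.Tendsto (fun y : ℝ => (2 / σ ^ 2) ^ k * y ^ (-k)) Filter.atTop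
          (nhds ((2 / σ ^ 2) ^ k * 0)) :=
        (tendsto_rpow_neg_atTop hk0).const_mul _
      rw [mul_zero] at h1
      apply h1.congr'
      filter_upwards [Filter.eventually_gt_atTop (0:ℝ)] with y hy
      have hbase : 2 / (y * σ ^ 2) = (2 / σ ^ 2) * y⁻¹ := by field_simp
      rw [hbase, Real.mul_rpow (by positivity) (by positivity),
        Real.inv_rpow hy.le, ← Real.rpow_neg hy.le]
    have hC : Filter.Tendsto (fun y : ℝ => (((2 / (y * σ ^ 2)) ^ k : ℝ) : ℂ))
        Filter.atTop (nhds 0) := by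
      have := (Complex.continuous_ofReal.tendsto 0).comp hreal
      exact this
    have hcpow : Filter.Tendsto (fun y : ℝ => (2 / (y * σ ^ 2) : ℂ) ^ (k : ℂ))
        Filter.atTop (nhds 0) := by
      apply hC.congr'
      filter_upwards [Filter.eventually_gt_atTop (0:ℝ)] with y hy
      have h0 : (0:ℝ) ≤ 2 / (y * σ ^ 2) := by positivity
      rw [Complex.ofReal_cpow h0]
      push_cast
      try ring_nf
    have := (hcpow.const_mul (1 / (lam : ℂ))).mul_const
      (Complex.Gamma (1 - 2 * μ / σ ^ 2 + k) / Complex.Gamma (1 - 2 * μ / σ ^ 2 + 2 * k))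
    simpa using this
  -- second factor is bounded
  apply hF.zero_mul_isBoundedUnder_le
  apply Filter.isBoundedUnder_of_eventually_le
    (a := ∑' n : ℕ, (ascPochhammer ℝ n).eval ‖(k:ℂ)‖ / ((n.factorial : ℝ))^2)
  filter_upwards [Filter.eventually_ge_atTop (2 / σ ^ 2)] with y hy
  have hypos : 0 < y := lt_of_lt_of_le (by positivity) hy
  have hz : ‖((-2 / (y * σ ^ 2) : ℝ) : ℂ)‖ ≤ 1 := by
    rw [Complex.norm_real, Real.norm_eq_abs, abs_div, abs_neg]
    rw [abs_of_nonneg (by norm_num : (0:ℝ) ≤ 2), abs_of_pos (by positivity)]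
    rw [div_le_one (by positivity)]
    calc (2:ℝ) = (2 / σ ^ 2) * σ ^ 2 := by field_simp
      _ ≤ y * σ ^ 2 := by apply mul_le_mul_of_nonneg_right hy hσ2.le
  exact kummer_bound (k:ℂ) hb1 _ hz
end

section
/- With k = (μ + √(μ² + 2λσ²))/σ², we have lim_{y → 0⁺} y^{−k} M(k, 1 − 2μ/σ² + 2k, −2/(yσ²)) = (σ²/2)^k · Γ(1 − 2μ/σ² + 2k)/Γ(1 − 2μ/σ² + k). -/
open MeasureTheory Real Filter Set

lemma asc_cast (n : ℕ) (x : ℝ) :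
    (ascPochhammer ℂ n).eval (x : ℂ) = (((ascPochhammer ℝ n).eval x : ℝ) : ℂ) := by
  induction n with
  | zero => simp
  | succ n ih => rw [ascPochhammer_succ_eval, ascPochhammer_succ_eval]; push_cast [ih]; ring

lemma gamma_asc (x : ℝ) (hx : 0 < x) (n : ℕ) :
    Real.Gamma (x + n) = (ascPochhammer ℝ n).eval x * Real.Gamma x := by
  induction n with
  | zero => simp
  | succ n ih =>
    have hxn : (x + n) ≠ 0 := by positivity
    rw [ascPochhammer_succ_eval]
    push_cast
    rw [show x + (n + 1) = (x + n) + 1 by ring, Real.Gamma_add_one hxn, ih]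
    ring

noncomputable def realBeta (a c : ℝ) : ℝ := ∫ t in (0:ℝ)..1, t ^ (a-1) * (1-t) ^ (c-1)

lemma realBeta_gamma {a c : ℝ} (ha : 0 < a) (hc : 0 < c) :
    Real.Gamma a * Real.Gamma c = Real.Gamma (a + c) * realBeta a c := by
  have h := Complex.Gamma_mul_Gamma_eq_betaIntegral (s := a) (t := c)
    (by simpa using ha) (by simpa using hc)
  have hbeta : Complex.betaIntegral a c = ((realBeta a c : ℝ) : ℂ) := by
    rw [Complex.betaIntegral, realBeta, ← intervalIntegral.integral_ofReal]
    refine intervalIntegral.integral_congr (fun t ht => ?_)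
    rw [uIcc_of_le (by norm_num)] at ht
    rw [Complex.ofReal_mul, Complex.ofReal_cpow ht.1, Complex.ofReal_cpow (by linarith [ht.2])]
    push_cast
    ring
  rw [hbeta, ← Complex.ofReal_add, Complex.Gamma_ofReal, Complex.Gamma_ofReal,
    Complex.Gamma_ofReal, ← Complex.ofReal_mul, ← Complex.ofReal_mul] at h
  exact_mod_cast h


lemma realBeta_eq {a c : ℝ} (ha : 0 < a) (hc : 0 < c) :
    realBeta a c = Real.Gamma a * Real.Gamma c / Real.Gamma (a + c) := by
  rw [realBeta_gamma ha hc]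
  field_simp [(Real.Gamma_pos_of_pos (by linarith : (0:ℝ) < a + c)).ne']

lemma realBeta_pos {a c : ℝ} (ha : 0 < a) (hc : 0 < c) : 0 < realBeta a c := by
  rw [realBeta_eq ha hc]
  have := Real.Gamma_pos_of_pos ha
  have := Real.Gamma_pos_of_pos hc
  have := Real.Gamma_pos_of_pos (by linarith : (0:ℝ) < a + c)
  positivity

lemma realBeta_shift {a c : ℝ} (ha : 0 < a) (hc : 0 < c) (n : ℕ) :
    realBeta (a + n) c = ((ascPochhammer ℝ n).eval a / (ascPochhammer ℝ n).eval (a + c))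
      * realBeta a c := by
  have hasc : 0 < (ascPochhammer ℝ n).eval (a + c) :=
    ascPochhammer_pos n _ (by linarith)
  have h1 : (0:ℝ) < a + n := by positivity
  rw [realBeta_eq h1 hc, realBeta_eq ha hc,
    show a + n + c = (a + c) + n by ring, gamma_asc a ha n, gamma_asc (a+c) (by linarith) n]
  have := Real.Gamma_pos_of_pos (by linarith : (0:ℝ) < a + c)
  field_simp

lemma weight_integrable {a c : ℝ} (ha : 0 < a) (hc : 0 < c) :
    IntegrableOn (fun t : ℝ => t ^ (a-1) * (1-t) ^ (c-1)) (Ioo 0 1) := by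
  have h := (Complex.betaIntegral_convergent (u := (a:ℂ)) (v := (c:ℂ))
    (by simpa using ha) (by simpa using hc)).norm
  rw [intervalIntegrable_iff_integrableOn_Ioo_of_le (by norm_num)] at h
  refine h.congr_fun (fun t ht => ?_) measurableSet_Ioo
  simp only [norm_mul]
  rw [show (a:ℂ) - 1 = ((a - 1 : ℝ) : ℂ) by push_cast; ring,
    show (c:ℂ) - 1 = ((c - 1 : ℝ) : ℂ) by push_cast; ring,
    show (1 : ℂ) - t = ((1 - t : ℝ) : ℂ) by push_cast; ring,
    ← Complex.ofReal_cpow ht.1.le, ← Complex.ofReal_cpow (by linarith [ht.2] : (0:ℝ) ≤ 1 - t)]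
  rw [Complex.norm_real, Complex.norm_real, Real.norm_eq_abs, Real.norm_eq_abs,
    abs_of_nonneg (rpow_nonneg ht.1.le _), abs_of_nonneg (rpow_nonneg (by linarith [ht.2]) _)]


lemma ioo_integral_weight (a c : ℝ) :
    ∫ t in Ioo (0:ℝ) 1, t ^ (a-1) * (1-t) ^ (c-1) = realBeta a c := by
  rw [realBeta, intervalIntegral.integral_of_le (by norm_num), integral_Ioc_eq_integral_Ioo]

lemma ioo_integral_weight_shift {a c : ℝ} (ha : 0 < a) (n : ℕ) :
    ∫ t in Ioo (0:ℝ) 1, t ^ (n:ℝ) * (t ^ (a-1) * (1-t) ^ (c-1)) = realBeta (a + n) c := by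
  rw [← ioo_integral_weight]
  refine setIntegral_congr_fun measurableSet_Ioo (fun t ht => ?_)
  rw [← mul_assoc, ← Real.rpow_add ht.1]
  ring_nf

lemma series_eq_integral {a c : ℝ} (ha : 0 < a) (hc : 0 < c) (z : ℝ) :
    (∑' n : ℕ, ((ascPochhammer ℝ n).eval a / (ascPochhammer ℝ n).eval (a+c)) * z ^ n / (Nat.factorial n : ℝ))
      = (realBeta a c)⁻¹ *
        ∫ t in Ioo (0:ℝ) 1, Real.exp (z*t) * (t ^ (a-1) * (1-t) ^ (c-1)) := by
  set w : ℝ → ℝ := fun t => t ^ (a-1) * (1-t) ^ (c-1) with hw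
  set F : ℕ → ℝ → ℝ := fun n t => (z ^ n * t ^ (n:ℝ) / (Nat.factorial n : ℝ)) * w t with hF
  have hwmeas : Measurable w := by
    rw [hw]
    have m1 : Measurable (fun t : ℝ => t ^ (a-1)) := by measurability
    have mb : Measurable (fun s : ℝ => s ^ (c-1)) := by measurability
    exact m1.mul (mb.comp (measurable_const.sub measurable_id))
  have hwint := weight_integrable ha hc
  have hwnn : ∀ t ∈ Ioo (0:ℝ) 1, 0 ≤ w t := fun t ht => by
    have h2 : (0:ℝ) ≤ 1 - t := by linarith [ht.2]
    have h1 := ht.1.le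
    rw [hw]
    positivity
  have hFbound : ∀ n : ℕ, ∀ t ∈ Ioo (0:ℝ) 1, ‖F n t‖ ≤ |z| ^ n / (Nat.factorial n : ℝ) * w t := by
    intro n t ht
    have h1 : |t ^ (n:ℝ)| ≤ 1 := by
      rw [abs_of_nonneg (rpow_nonneg ht.1.le _)]
      exact Real.rpow_le_one ht.1.le ht.2.le (by positivity)
    have : ‖F n t‖ = |z| ^ n * |t ^ (n:ℝ)| / (Nat.factorial n : ℝ) * w t := by
      rw [hF]
      simp only [Real.norm_eq_abs, abs_mul, abs_div, abs_pow, Nat.abs_cast,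
        abs_of_nonneg (hwnn t ht)]
      try ring
    rw [this]
    have hwt := hwnn t ht
    calc |z| ^ n * |t ^ (n:ℝ)| / (Nat.factorial n : ℝ) * w t
        ≤ |z| ^ n * 1 / (Nat.factorial n : ℝ) * w t := by gcongr
      _ = |z| ^ n / (Nat.factorial n : ℝ) * w t := by ring
  have hFint : ∀ n : ℕ, Integrable (F n) (volume.restrict (Ioo (0:ℝ) 1)) := by
    intro n
    refine Integrable.mono' ((hwint.const_mul (|z| ^ n / (Nat.factorial n : ℝ)))) ?_ ?_
    · refine Measurable.aestronglyMeasurable ?_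
      have : Measurable (fun t : ℝ => t ^ (n:ℝ)) := by measurability
      exact ((this.const_mul _).div_const _).mul hwmeas
    · exact (ae_restrict_iff' measurableSet_Ioo).2 (Filter.Eventually.of_forall
        (fun t ht => hFbound n t ht))
  have hintnorm : ∀ n : ℕ, ∫ t in Ioo (0:ℝ) 1, ‖F n t‖ ≤ |z| ^ n / (Nat.factorial n : ℝ) * realBeta a c := by
    intro n
    have := ioo_integral_weight a c
    calc ∫ t in Ioo (0:ℝ) 1, ‖F n t‖
        ≤ ∫ t in Ioo (0:ℝ) 1, |z| ^ n / (Nat.factorial n : ℝ) * w t := by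
          refine setIntegral_mono_on (hFint n).norm (hwint.const_mul _)
            measurableSet_Ioo (fun t ht => hFbound n t ht)
      _ = |z| ^ n / (Nat.factorial n : ℝ) * realBeta a c := by
          rw [integral_const_mul, ioo_integral_weight]
  have hsum : Summable (fun n : ℕ => ∫ t in Ioo (0:ℝ) 1, ‖F n t‖) := by
    refine Summable.of_nonneg_of_le (fun n => ?_) (fun n => hintnorm n) ?_
    · exact integral_nonneg (fun t => norm_nonneg _)
    · exact (Real.summable_pow_div_factorial |z|).mul_right _
  have hHS := MeasureTheory.hasSum_integral_of_summable_integral_norm hFint hsum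
  have htsum : ∀ t ∈ Ioo (0:ℝ) 1, ∑' n : ℕ, F n t = Real.exp (z*t) * w t := by
    intro t ht
    rw [hF]
    simp only
    rw [tsum_mul_right]
    congr 1
    have : ∀ n : ℕ, z ^ n * t ^ (n:ℝ) / (Nat.factorial n : ℝ) = (z*t) ^ n / (Nat.factorial n : ℝ) := by
      intro n
      rw [Real.rpow_natCast, mul_pow]
    rw [tsum_congr this]
    rw [Real.exp_eq_exp_ℝ, NormedSpace.exp_eq_tsum_div]
  have hterm : ∀ n : ℕ, ∫ t in Ioo (0:ℝ) 1, F n t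
      = (((ascPochhammer ℝ n).eval a / (ascPochhammer ℝ n).eval (a+c)) * z ^ n / (Nat.factorial n : ℝ))
        * realBeta a c := by
    intro n
    have heq : ∀ t ∈ Ioo (0:ℝ) 1, F n t
        = (z ^ n / (Nat.factorial n : ℝ)) * (t ^ (n:ℝ) * w t) := fun t ht => by
      rw [hF]; ring
    rw [setIntegral_congr_fun measurableSet_Ioo heq, integral_const_mul,
      ioo_integral_weight_shift ha n, realBeta_shift ha hc n]
    ring
  have hHS2 : HasSum
      (fun n : ℕ => (((ascPochhammer ℝ n).eval a / (ascPochhammer ℝ n).eval (a+c))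
        * z ^ n / (Nat.factorial n : ℝ)) * realBeta a c)
      (∫ t in Ioo (0:ℝ) 1, Real.exp (z*t) * w t) := by
    have h2 : (∫ t in Ioo (0:ℝ) 1, ∑' n : ℕ, F n t)
        = ∫ t in Ioo (0:ℝ) 1, Real.exp (z*t) * w t :=
      setIntegral_congr_fun measurableSet_Ioo htsum
    rw [← h2]
    exact hHS.congr_fun (fun n => (hterm n).symm)
  have hBne := (realBeta_pos ha hc).ne'
  have := hHS2.tsum_eq
  rw [tsum_mul_right] at this
  rw [eq_inv_mul_iff_mul_eq₀ hBne, mul_comm (realBeta a c)]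
  exact this

set_option maxHeartbeats 1000000 in
lemma tendsto_scaled_integral {a c : ℝ} (ha : 0 < a) (hc : 1 < c) :
    Tendsto (fun ε : ℝ => ε ^ (-a) *
        ∫ t in Ioo (0:ℝ) 1, Real.exp (-(t/ε)) * (t ^ (a-1) * (1-t) ^ (c-1)))
      (nhdsWithin 0 (Ioi 0)) (nhds (Real.Gamma a)) := by
  set G : ℝ → ℝ → ℝ := fun ε s =>
    indicator (Ioo 0 (1/ε)) (fun s => Real.exp (-s) * s ^ (a-1) * (1 - ε*s) ^ (c-1)) s with hG
  have key : ∀ ε : ℝ, 0 < ε → ε ^ (-a) *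
      (∫ t in Ioo (0:ℝ) 1, Real.exp (-(t/ε)) * (t ^ (a-1) * (1-t) ^ (c-1)))
      = ∫ s in Ioi (0:ℝ), G ε s := by
    intro ε hε
    set f : ℝ → ℝ := indicator (Ioo 0 1) (fun t => Real.exp (-(t/ε)) * (t ^ (a-1) * (1-t) ^ (c-1))) with hf
    have h1 : (∫ t in Ioo (0:ℝ) 1, Real.exp (-(t/ε)) * (t ^ (a-1) * (1-t) ^ (c-1)))
        = ∫ t in Ioi (0:ℝ), f t := by
      rw [hf, integral_indicator measurableSet_Ioo,
        Measure.restrict_restrict measurableSet_Ioo,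
        inter_eq_self_of_subset_left Ioo_subset_Ioi_self]
    have h2 : ∫ s in Ioi (0:ℝ), f (ε * s) = ε⁻¹ • ∫ t in Ioi (ε * 0), f t :=
      integral_comp_mul_left_Ioi f 0 hε
    have h3 : ∀ s ∈ Ioi (0:ℝ), f (ε * s) = ε ^ (a-1) * G ε s := by
      intro s hs
      have hs' : (0:ℝ) < s := hs
      by_cases hlt : s < 1/ε
      · have hεs : ε * s ∈ Ioo (0:ℝ) 1 := by
          constructor
          · positivity
          · rw [lt_div_iff₀ hε] at hlt; linarith [hlt]
        have hsmem : s ∈ Ioo (0:ℝ) (1/ε) := ⟨hs', hlt⟩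
        simp only [hf, hG, indicator_of_mem hεs, indicator_of_mem hsmem]
        rw [Real.mul_rpow hε.le hs'.le, show ε * s / ε = s by field_simp]
        ring
      · have hεs : ε * s ∉ Ioo (0:ℝ) 1 := by
          rw [not_lt, div_le_iff₀ hε] at hlt
          intro h
          have := h.2
          nlinarith
        have hsmem : s ∉ Ioo (0:ℝ) (1/ε) := fun h => hlt h.2
        simp only [hf, hG, indicator_of_notMem hεs, indicator_of_notMem hsmem, mul_zero]
    rw [mul_zero] at h2
    rw [setIntegral_congr_fun measurableSet_Ioi h3, integral_const_mul, smul_eq_mul] at h2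
    have hpow : ε ^ (-a) * (ε * ε ^ (a-1)) = 1 := by
      have he1 : ε * ε ^ (a-1) = ε ^ a := by
        nth_rewrite 1 [← Real.rpow_one ε]
        rw [← Real.rpow_add hε]; ring_nf
      rw [he1, ← Real.rpow_add hε]
      simp
    have hA : (∫ t in Ioi (0:ℝ), f t) = ε * (ε ^ (a-1) * ∫ s in Ioi (0:ℝ), G ε s) := by
      have h4 := congrArg (fun x => ε * x) h2
      rw [← mul_assoc (ε) (ε⁻¹), mul_inv_cancel₀ hε.ne', one_mul] at h4
      linarith [h4]
    rw [h1, hA]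
    calc ε ^ (-a) * (ε * (ε ^ (a-1) * ∫ s in Ioi (0:ℝ), G ε s))
        = (ε ^ (-a) * (ε * ε ^ (a-1))) * ∫ s in Ioi (0:ℝ), G ε s := by ring
      _ = ∫ s in Ioi (0:ℝ), G ε s := by rw [hpow, one_mul]
  have hbound_int : IntegrableOn (fun s : ℝ => Real.exp (-s) * s ^ (a-1)) (Ioi 0) :=
    Real.GammaIntegral_convergent ha
  have hGamma : Real.Gamma a = ∫ s in Ioi (0:ℝ), Real.exp (-s) * s ^ (a-1) :=
    Real.Gamma_eq_integral ha
  have hmain : Tendsto (fun ε : ℝ => ∫ s in Ioi (0:ℝ), G ε s) (nhdsWithin 0 (Ioi 0))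
      (nhds (∫ s in Ioi (0:ℝ), Real.exp (-s) * s ^ (a-1))) := by
    apply tendsto_integral_filter_of_dominated_convergence
      (fun s : ℝ => Real.exp (-s) * s ^ (a-1))
    · refine Eventually.of_forall (fun ε => ?_)
      refine (Measurable.indicator ?_ measurableSet_Ioo).aestronglyMeasurable
      have mr : Measurable (fun s : ℝ => s ^ (a-1)) := by measurability
      have m1 : Measurable (fun s : ℝ => Real.exp (-s) * s ^ (a-1)) :=
        (Real.measurable_exp.comp measurable_neg).mul mr
      have m3 : Measurable (fun s : ℝ => (1 - ε*s) ^ (c-1)) := by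
        have mb : Measurable (fun u : ℝ => u ^ (c-1)) := by measurability
        exact mb.comp (measurable_const.sub (measurable_const.mul measurable_id))
      exact m1.mul m3
    · filter_upwards [self_mem_nhdsWithin] with ε hε
      have hε : (0:ℝ) < ε := hε
      refine (ae_restrict_iff' measurableSet_Ioi).2 (Eventually.of_forall fun s hs => ?_)
      have hs' : (0:ℝ) < s := hs
      by_cases hmem : s ∈ Ioo 0 (1/ε)
      · rw [hG]
        simp only [indicator_of_mem hmem]
        have hεs1 : ε * s < 1 := by
          have := hmem.2
          rw [lt_div_iff₀ hε] at this
          linarith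
        have h0 : (0:ℝ) ≤ 1 - ε*s := by linarith
        have hle1 : (1 - ε*s) ^ (c-1) ≤ 1 :=
          Real.rpow_le_one h0 (by nlinarith) (by linarith)
        have hnn : (0:ℝ) ≤ Real.exp (-s) * s ^ (a-1) * (1 - ε*s) ^ (c-1) := by positivity
        rw [Real.norm_eq_abs, abs_of_nonneg hnn]
        exact mul_le_of_le_one_right (by positivity) hle1
      · rw [hG]
        simp only [indicator_of_notMem hmem, norm_zero]
        positivity
    · exact hbound_int
    · refine (ae_restrict_iff' measurableSet_Ioi).2 (Eventually.of_forall fun s hs => ?_)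
      have hs' : (0:ℝ) < s := hs
      have h5 : Tendsto (fun ε : ℝ => Real.exp (-s) * s ^ (a-1) * (1 - ε*s) ^ (c-1))
          (nhdsWithin 0 (Ioi 0)) (nhds (Real.exp (-s) * s ^ (a-1))) := by
        have ht1 : Tendsto (fun ε : ℝ => 1 - ε*s) (nhdsWithin 0 (Ioi 0)) (nhds 1) := by
          have h7 : Continuous (fun ε : ℝ => 1 - ε * s) :=
            continuous_const.sub (continuous_id.mul continuous_const)
          have h8 := h7.tendsto (0:ℝ)
          simp only [zero_mul, sub_zero] at h8
          exact h8.mono_left nhdsWithin_le_nhds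
        have h6 := ht1.rpow_const (Or.inr (by linarith : (0:ℝ) ≤ c-1))
        rw [Real.one_rpow] at h6
        simpa using tendsto_const_nhds.mul h6
      refine Tendsto.congr' ?_ h5
      filter_upwards [Ioo_mem_nhdsGT_of_mem (show (0:ℝ) ∈ Ico (0:ℝ) (1/s) from ⟨le_refl _, by positivity⟩)] with ε hε
      have hεpos : (0:ℝ) < ε := hε.1
      have hmem : s ∈ Ioo 0 (1/ε) := by
        refine ⟨hs', ?_⟩
        have := hε.2
        rw [lt_div_iff₀ hs'] at this
        rw [lt_div_iff₀ hεpos]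
        linarith
      rw [hG]
      simp only [indicator_of_mem hmem]
  rw [hGamma]
  refine Tendsto.congr' ?_ hmain
  filter_upwards [self_mem_nhdsWithin] with ε hε
  exact (key ε hε).symm


lemma kummerM_ofReal (a b z : ℝ) :
    kummerM a b z = ((∑' n : ℕ, ((ascPochhammer ℝ n).eval a / (ascPochhammer ℝ n).eval b)
      * z ^ n / (Nat.factorial n : ℝ)) : ℝ) := by
  rw [kummerM, Complex.ofReal_tsum]
  exact tsum_congr fun n => by rw [asc_cast, asc_cast]; push_cast; ring

lemma real_limit {a c : ℝ} (ha : 0 < a) (hc : 1 < c) :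
    Tendsto (fun ε : ℝ => ε ^ (-a) * (∑' n : ℕ,
      ((ascPochhammer ℝ n).eval a / (ascPochhammer ℝ n).eval (a+c)) * (-1/ε) ^ n
        / (Nat.factorial n : ℝ)))
      (nhdsWithin 0 (Ioi 0)) (nhds (Real.Gamma (a+c) / Real.Gamma c)) := by
  have hc0 : (0:ℝ) < c := by linarith
  have hB := realBeta_pos ha hc0
  have hkey : ∀ ε : ℝ, 0 < ε → ε ^ (-a) * (∑' n : ℕ,
      ((ascPochhammer ℝ n).eval a / (ascPochhammer ℝ n).eval (a+c)) * (-1/ε) ^ n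
        / (Nat.factorial n : ℝ))
      = (realBeta a c)⁻¹ * (ε ^ (-a) *
          ∫ t in Ioo (0:ℝ) 1, Real.exp (-(t/ε)) * (t ^ (a-1) * (1-t) ^ (c-1))) := by
    intro ε hε
    rw [series_eq_integral ha hc0 (-1/ε)]
    have : ∀ t : ℝ, Real.exp ((-1/ε)*t) = Real.exp (-(t/ε)) := fun t => by ring_nf
    simp_rw [this]
    ring
  have hmain := Tendsto.const_mul ((realBeta a c)⁻¹) (tendsto_scaled_integral ha hc)
  have hval : (realBeta a c)⁻¹ * Real.Gamma a = Real.Gamma (a+c) / Real.Gamma c := by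
    rw [realBeta_eq ha hc0]
    have h1 := (Real.Gamma_pos_of_pos ha).ne'
    have h2 := (Real.Gamma_pos_of_pos hc0).ne'
    have h3 := (Real.Gamma_pos_of_pos (by linarith : (0:ℝ) < a + c)).ne'
    field_simp
  rw [← hval]
  refine Tendsto.congr' ?_ hmain
  filter_upwards [self_mem_nhdsWithin] with ε hε
  exact (hkey ε hε).symm

theorem limit_at_zero_plus (μ σ lam k : ℝ) (hσ : 0 < σ) (hlam : 0 < lam)
    (hk : k = (μ + Real.sqrt (μ ^ 2 + 2 * lam * σ ^ 2)) / σ ^ 2) :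
    Filter.Tendsto
      (fun y : ℝ => (y : ℂ) ^ (-(k : ℂ)) *
        kummerM k (1 - 2 * μ / σ ^ 2 + 2 * k) (-2 / (y * σ ^ 2)))
      (nhdsWithin 0 (Set.Ioi 0))
      (nhds (((σ ^ 2 / 2 : ℝ) : ℂ) ^ (k : ℂ) *
        Complex.Gamma (1 - 2 * μ / σ ^ 2 + 2 * k) / Complex.Gamma (1 - 2 * μ / σ ^ 2 + k))) := by
  have hs2 : (0:ℝ) < σ ^ 2 := by positivity
  set R := Real.sqrt (μ ^ 2 + 2 * lam * σ ^ 2) with hR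
  have hRabs : |μ| < R := by
    rw [hR, ← Real.sqrt_sq_eq_abs]
    exact Real.sqrt_lt_sqrt (sq_nonneg μ) (by nlinarith)
  have hμ1 : μ < R := lt_of_le_of_lt (le_abs_self μ) hRabs
  have hμ2 : -μ < R := lt_of_le_of_lt (neg_le_abs μ) hRabs
  have hk0 : 0 < k := by rw [hk]; exact div_pos (by linarith) hs2
  set c : ℝ := 1 - 2 * μ / σ ^ 2 + k with hc
  have hc1 : 1 < c := by
    have h1 : k - 2 * μ / σ ^ 2 = (R - μ) / σ ^ 2 := by rw [hk]; ring
    have h2 : 0 < (R - μ) / σ ^ 2 := div_pos (by linarith) hs2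
    rw [hc]; linarith
  have hkc : k + c = 1 - 2 * μ / σ ^ 2 + 2 * k := by rw [hc]; ring
  -- real-valued limit after rescaling
  have hε : Tendsto (fun y : ℝ => y * (σ ^ 2 / 2)) (nhdsWithin 0 (Ioi 0))
      (nhdsWithin 0 (Ioi 0)) := by
    rw [tendsto_nhdsWithin_iff]
    constructor
    · have hcont : Continuous (fun y : ℝ => y * (σ ^ 2 / 2)) :=
        continuous_id.mul continuous_const
      have h9 := hcont.tendsto (0:ℝ)
      simp only [zero_mul] at h9
      exact h9.mono_left nhdsWithin_le_nhds
    · filter_upwards [self_mem_nhdsWithin] with y hy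
      have : (0:ℝ) < y := hy
      have : (0:ℝ) < y * (σ ^ 2 / 2) := by positivity
      exact this
  have Hreal := Tendsto.const_mul ((σ ^ 2 / 2) ^ k) ((real_limit hk0 hc1).comp hε)
  -- identify the limit value
  have hσ2 : (0:ℝ) < σ ^ 2 / 2 := by positivity
  have htarget : (((σ ^ 2 / 2 : ℝ) : ℂ) ^ (k : ℂ) *
        Complex.Gamma (1 - 2 * ↑μ / ↑σ ^ 2 + 2 * ↑k) / Complex.Gamma (1 - 2 * ↑μ / ↑σ ^ 2 + ↑k))
      = (((σ ^ 2 / 2) ^ k * (Real.Gamma (k + c) / Real.Gamma c) : ℝ) : ℂ) := by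
    have e1 : ((1:ℂ) - 2 * ↑μ / ↑σ ^ 2 + 2 * ↑k) = ((k + c : ℝ) : ℂ) := by
      rw [hkc]; push_cast; ring
    have e2 : ((1:ℂ) - 2 * ↑μ / ↑σ ^ 2 + ↑k) = ((c : ℝ) : ℂ) := by
      rw [hc]; push_cast; ring
    rw [e1, e2, Complex.Gamma_ofReal, Complex.Gamma_ofReal,
      ← Complex.ofReal_cpow hσ2.le]
    push_cast
    ring
  rw [htarget]
  refine Tendsto.congr' ?_ ((Complex.continuous_ofReal.tendsto _).comp Hreal)
  filter_upwards [self_mem_nhdsWithin] with y hy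
  have hy0 : (0:ℝ) < y := hy
  have hyε : (0:ℝ) < y * (σ ^ 2 / 2) := by positivity
  -- rewrite the complex expression as a cast of the real one
  have harg2 : ((1:ℂ) - 2 * ↑μ / ↑σ ^ 2 + 2 * ↑k) = ((k + c : ℝ) : ℂ) := by
    rw [hkc]; push_cast; ring
  have harg3 : ((-2 : ℂ) / (↑y * ↑σ ^ 2)) = ((-1 / (y * (σ ^ 2 / 2)) : ℝ) : ℂ) := by
    have hr : (-2 / (y * σ ^ 2) : ℝ) = -1 / (y * (σ ^ 2 / 2)) := by
      field_simp
    rw [← hr]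
    push_cast
    ring
  have hcpow : ((y:ℂ)) ^ (-(k:ℂ)) = ((y ^ (-k) : ℝ) : ℂ) := by
    rw [Complex.ofReal_cpow hy0.le, Complex.ofReal_neg]
  have hone : (σ ^ 2 / 2) ^ k * (σ ^ 2 / 2) ^ (-k) = 1 := by
    rw [← Real.rpow_add hσ2]
    simp
  have key2 : ∀ S : ℝ, (σ ^ 2 / 2) ^ k * ((y * (σ ^ 2 / 2)) ^ (-k) * S) = y ^ (-k) * S := by
    intro S
    rw [Real.mul_rpow hy0.le hσ2.le]
    linear_combination (y ^ (-k) * S) * hone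
  simp only [Function.comp_apply]
  rw [harg2, harg3, kummerM_ofReal, hcpow, ← Complex.ofReal_mul, key2]
end
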